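/- arXiv:2210.00976 — 5 statements merged into one kernel-verified Lean document; each statement's English description precedes it below -/
import Mathlib

section
/- Let ℓ > 0, let k_u ∈ C¹([0,ℓ]) and k_w, k_θ ∈ C⁰([0,ℓ]) be strictly positive, and let u : [0,ℓ]×[0,∞) → ℝ be a C² function satisfying the damped wave equation u_tt = (k_u u_s)_s − k_w u_t − k_θ u with boundary conditions u(0,t) = 0 and u_s(ℓ,t) = 0 for all t ≥ 0. Then there exist constants C > 0 and λ > 0 such that ‖u(·,t)‖_{L²} + ‖u_t(·,t)‖_{L²} + ‖u_s(·,t)‖_{L²} ≤ C e^{−λt} for all t ≥ 0. -/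
set_option maxHeartbeats 1000000

/-- Pointwise lower bound for the energy density. -/
lemma stmt1_aux_lower (a b c κu κθ a₀ c₀ eps : ℝ) (h1 : a₀ ≤ κu) (h2 : c₀ ≤ κθ)
    (hε0 : 0 < eps) (hε1 : eps ≤ 1/2) (hε2 : eps ≤ c₀/2) :
    b^2/4 + a₀/2*c^2 + c₀/4*a^2 ≤ b^2/2 + κu*c^2/2 + κθ*a^2/2 + eps*(a*b) := by
  nlinarith [sq_nonneg (a+b), sq_nonneg (a-b), sq_nonneg a, sq_nonneg b, sq_nonneg c,
    mul_nonneg hε0.le (sq_nonneg (a+b)), mul_nonneg hε0.le (sq_nonneg (a-b)),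
    mul_nonneg (sub_nonneg.2 h1) (sq_nonneg c), mul_nonneg (sub_nonneg.2 h2) (sq_nonneg a)]

/-- Pointwise dissipation bound: `g + 2 λ F ≤ 0`. -/
lemma stmt1_aux_main (a b c κu κw κθ a₀ w₀ c₀ A W C0 eps lam : ℝ)
    (ha1 : a₀ ≤ κu) (ha2 : κu ≤ A) (hw1 : w₀ ≤ κw) (hw2 : κw ≤ W)
    (hc1 : c₀ ≤ κθ) (hc2 : κθ ≤ C0)
    (ha₀ : 0 < a₀) (hw₀ : 0 < w₀) (hc₀ : 0 < c₀)
    (hε0 : 0 < eps) (hεw : eps * (2*c₀ + W^2) ≤ c₀ * w₀)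
    (hlam : 0 < lam)
    (hl1 : 2*lam*((1+eps)/2) ≤ w₀/2)
    (hl2 : 2*lam*(A/2) ≤ eps*a₀)
    (hl3 : 2*lam*((C0+eps)/2) ≤ eps*c₀/2) :
    (-(κw*b^2) + eps*b^2 - eps*(κw*(a*b)) - eps*(κθ*a^2) - eps*(κu*c^2))
      + 2*lam*(b^2/2 + κu*c^2/2 + κθ*a^2/2 + eps*(a*b)) ≤ 0 := by
  have hW0 : 0 ≤ W := hw₀.le.trans (hw1.trans hw2)
  have young : 2*c₀ * (-(κw*(a*b))) ≤ c₀^2*a^2 + W^2*b^2 := by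
    have hκw0 : 0 ≤ κw := hw₀.le.trans hw1
    have h1 : -(κw*(a*b)) ≤ κw * |a*b| := by
      nlinarith [neg_abs_le (a*b), abs_nonneg (a*b)]
    have h2 : κw * |a*b| ≤ W * |a*b| := mul_le_mul_of_nonneg_right hw2 (abs_nonneg _)
    have h3 : 2*c₀*(W*|a*b|) ≤ c₀^2*a^2 + W^2*b^2 := by
      rw [abs_mul]
      nlinarith [sq_nonneg (c₀ * |a| - W * |b|), sq_abs a, sq_abs b]
    nlinarith [mul_le_mul_of_nonneg_left (h1.trans h2) (by positivity : (0:ℝ) ≤ 2*c₀)]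
  have hy : (2*c₀) * (eps * (-(κw*(a*b)))) ≤ eps*(c₀^2*a^2) + eps*(W^2*b^2) := by
    have := mul_le_mul_of_nonneg_left young hε0.le
    nlinarith [this]
  have f1 : 0 ≤ (2*c₀) * ((κw - w₀)*b^2) :=
    mul_nonneg (by positivity) (mul_nonneg (sub_nonneg.2 hw1) (sq_nonneg b))
  have f2 : 0 ≤ (2*c₀) * (eps*((κu - a₀)*c^2)) :=
    mul_nonneg (by positivity)
      (mul_nonneg hε0.le (mul_nonneg (sub_nonneg.2 ha1) (sq_nonneg c)))
  have f3 : 0 ≤ (2*c₀) * (eps*((κθ - c₀)*a^2)) :=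
    mul_nonneg (by positivity)
      (mul_nonneg hε0.le (mul_nonneg (sub_nonneg.2 hc1) (sq_nonneg a)))
  have f4 : 0 ≤ (c₀*w₀ - eps*(2*c₀+W^2)) * b^2 :=
    mul_nonneg (sub_nonneg.2 hεw) (sq_nonneg b)
  have hg2 : (2*c₀) * ((-(κw*b^2) + eps*b^2 - eps*(κw*(a*b)) - eps*(κθ*a^2) - eps*(κu*c^2)))
      ≤ (2*c₀) * (-(w₀/2)*b^2 - eps*a₀*c^2 - (eps*c₀/2)*a^2) := by
    linarith [hy, f1, f2, f3, f4]
  have hg : (-(κw*b^2) + eps*b^2 - eps*(κw*(a*b)) - eps*(κθ*a^2) - eps*(κu*c^2))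
      ≤ -(w₀/2)*b^2 - eps*a₀*c^2 - (eps*c₀/2)*a^2 :=
    le_of_mul_le_mul_left hg2 (by positivity)
  have hF : b^2/2 + κu*c^2/2 + κθ*a^2/2 + eps*(a*b)
      ≤ ((1+eps)/2)*b^2 + (A/2)*c^2 + ((C0+eps)/2)*a^2 := by
    linarith [mul_nonneg hε0.le (sq_nonneg (a-b)),
      mul_nonneg (sub_nonneg.2 ha2) (sq_nonneg c), mul_nonneg (sub_nonneg.2 hc2) (sq_nonneg a)]
  have h2F : 2*lam*(b^2/2 + κu*c^2/2 + κθ*a^2/2 + eps*(a*b))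
      ≤ (w₀/2)*b^2 + eps*a₀*c^2 + (eps*c₀/2)*a^2 := by
    have h0 := mul_le_mul_of_nonneg_left hF (by positivity : (0:ℝ) ≤ 2*lam)
    have g1 : 0 ≤ (w₀/2 - 2*lam*((1+eps)/2))*b^2 :=
      mul_nonneg (sub_nonneg.2 hl1) (sq_nonneg b)
    have g2 : 0 ≤ (eps*a₀ - 2*lam*(A/2))*c^2 :=
      mul_nonneg (sub_nonneg.2 hl2) (sq_nonneg c)
    have g3 : 0 ≤ (eps*c₀/2 - 2*lam*((C0+eps)/2))*a^2 :=
      mul_nonneg (sub_nonneg.2 hl3) (sq_nonneg a)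
    linarith [h0, g1, g2, g3]
  linarith


section
variable (ℓ : ℝ) (hℓ : 0 < ℓ)



/-- The `L²` norm of `f` on `[0, ℓ]`. -/
noncomputable def L2norm (ℓ : ℝ) (f : ℝ → ℝ) : ℝ :=
  Real.sqrt (∫ s in (0:ℝ)..ℓ, (f s) ^ 2)

open Set MeasureTheory intervalIntegral Metric

/-- inner-loop exponential energy decay for the damped wave equation
`u_tt = (k_u u_s)_s − k_w u_t − k_θ u` on `[0,ℓ]×[0,∞)` with `u(0,t)=0`, `u_s(ℓ,t)=0`:
`‖u‖_{L²} + ‖u_t‖_{L²} + ‖u_s‖_{L²} ≤ C e^{−λt}`. -/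
theorem stmt_1 (ℓ : ℝ) (hℓ : 0 < ℓ)
    (ku ku' kw kθ : ℝ → ℝ)
    (hku : ∀ s ∈ Set.Icc (0:ℝ) ℓ, HasDerivWithinAt ku (ku' s) (Set.Icc 0 ℓ) s)
    (hku'c : ContinuousOn ku' (Set.Icc 0 ℓ))
    (hkwc : ContinuousOn kw (Set.Icc 0 ℓ))
    (hkθc : ContinuousOn kθ (Set.Icc 0 ℓ))
    (hkupos : ∀ s ∈ Set.Icc (0:ℝ) ℓ, 0 < ku s)
    (hkwpos : ∀ s ∈ Set.Icc (0:ℝ) ℓ, 0 < kw s)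
    (hkθpos : ∀ s ∈ Set.Icc (0:ℝ) ℓ, 0 < kθ s)
    (u us ut ust utt q : ℝ → ℝ → ℝ)
    -- first-order partial derivatives
    (hus : ∀ t ∈ Set.Ici (0:ℝ), ∀ s ∈ Set.Icc (0:ℝ) ℓ,
      HasDerivWithinAt (fun x => u x t) (us s t) (Set.Icc 0 ℓ) s)
    (hut : ∀ t ∈ Set.Ici (0:ℝ), ∀ s ∈ Set.Icc (0:ℝ) ℓ,
      HasDerivWithinAt (fun τ => u s τ) (ut s t) (Set.Ici 0) t)
    -- second-order partial derivatives (u is C²)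
    (hust : ∀ t ∈ Set.Ici (0:ℝ), ∀ s ∈ Set.Icc (0:ℝ) ℓ,
      HasDerivWithinAt (fun τ => us s τ) (ust s t) (Set.Ici 0) t)
    (huts : ∀ t ∈ Set.Ici (0:ℝ), ∀ s ∈ Set.Icc (0:ℝ) ℓ,
      HasDerivWithinAt (fun x => ut x t) (ust s t) (Set.Icc 0 ℓ) s)
    (hutt : ∀ t ∈ Set.Ici (0:ℝ), ∀ s ∈ Set.Icc (0:ℝ) ℓ,
      HasDerivWithinAt (fun τ => ut s τ) (utt s t) (Set.Ici 0) t)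
    (hq : ∀ t ∈ Set.Ici (0:ℝ), ∀ s ∈ Set.Icc (0:ℝ) ℓ,
      HasDerivWithinAt (fun x => ku x * us x t) (q s t) (Set.Icc 0 ℓ) s)
    -- continuity of u and its derivatives up to second order
    (hcont : ContinuousOn
      (fun z : ℝ × ℝ => (u z.1 z.2, us z.1 z.2, ut z.1 z.2, ust z.1 z.2, utt z.1 z.2, q z.1 z.2))
      (Set.Icc 0 ℓ ×ˢ Set.Ici 0))
    -- the damped wave equation
    (hpde : ∀ t ∈ Set.Ici (0:ℝ), ∀ s ∈ Set.Icc (0:ℝ) ℓ,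
      utt s t = q s t - kw s * ut s t - kθ s * u s t)
    -- boundary conditions
    (hbc0 : ∀ t ∈ Set.Ici (0:ℝ), u 0 t = 0)
    (hbcl : ∀ t ∈ Set.Ici (0:ℝ), us ℓ t = 0) :
    ∃ C > (0:ℝ), ∃ lam > (0:ℝ), ∀ t ∈ Set.Ici (0:ℝ),
      L2norm ℓ (fun s => u s t) + L2norm ℓ (fun s => ut s t) + L2norm ℓ (fun s => us s t)
        ≤ C * Real.exp (-lam * t) := by
  have hl0 : (0:ℝ) ≤ ℓ := hℓ.le
  have hIcc : Set.uIcc (0:ℝ) ℓ = Set.Icc 0 ℓ := Set.uIcc_of_le hl0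
  have hIoc : Set.uIoc (0:ℝ) ℓ = Set.Ioc 0 ℓ := Set.uIoc_of_le hl0
  have hne : (Set.Icc (0:ℝ) ℓ).Nonempty := Set.nonempty_Icc.2 hl0
  have hkuc : ContinuousOn ku (Set.Icc 0 ℓ) := fun s hs => (hku s hs).continuousWithinAt
  -- two-variable continuity of components
  have hu2 : ContinuousOn (fun z : ℝ × ℝ => u z.1 z.2) (Set.Icc 0 ℓ ×ˢ Set.Ici 0) := hcont.fst
  have hus2 : ContinuousOn (fun z : ℝ × ℝ => us z.1 z.2) (Set.Icc 0 ℓ ×ˢ Set.Ici 0) :=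
    hcont.snd.fst
  have hut2 : ContinuousOn (fun z : ℝ × ℝ => ut z.1 z.2) (Set.Icc 0 ℓ ×ˢ Set.Ici 0) :=
    hcont.snd.snd.fst
  have hust2 : ContinuousOn (fun z : ℝ × ℝ => ust z.1 z.2) (Set.Icc 0 ℓ ×ˢ Set.Ici 0) :=
    hcont.snd.snd.snd.fst
  have hutt2 : ContinuousOn (fun z : ℝ × ℝ => utt z.1 z.2) (Set.Icc 0 ℓ ×ˢ Set.Ici 0) :=
    hcont.snd.snd.snd.snd.fst
  have hq2 : ContinuousOn (fun z : ℝ × ℝ => q z.1 z.2) (Set.Icc 0 ℓ ×ˢ Set.Ici 0) :=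
    hcont.snd.snd.snd.snd.snd
  -- s-slices
  have hmapS : ∀ t ∈ Set.Ici (0:ℝ), ∀ s ∈ Set.Icc (0:ℝ) ℓ,
      ((s, t) : ℝ × ℝ) ∈ Set.Icc (0:ℝ) ℓ ×ˢ Set.Ici (0:ℝ) := fun t ht s hs => ⟨hs, ht⟩
  have hsl : ∀ (f : ℝ → ℝ → ℝ),
      ContinuousOn (fun z : ℝ × ℝ => f z.1 z.2) (Set.Icc 0 ℓ ×ˢ Set.Ici 0) →
      ∀ t ∈ Set.Ici (0:ℝ), ContinuousOn (fun s => f s t) (Set.Icc 0 ℓ) := by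
    intro f hf t ht
    exact hf.comp ((continuous_id.prodMk continuous_const).continuousOn) (fun s hs => ⟨hs, ht⟩)
  have htl : ∀ (f : ℝ → ℝ → ℝ),
      ContinuousOn (fun z : ℝ × ℝ => f z.1 z.2) (Set.Icc 0 ℓ ×ˢ Set.Ici 0) →
      ∀ s ∈ Set.Icc (0:ℝ) ℓ, ContinuousOn (fun t => f s t) (Set.Ici 0) := by
    intro f hf s hs
    exact hf.comp ((continuous_const.prodMk continuous_id).continuousOn) (fun t ht => ⟨hs, ht⟩)
  -- interval integrability helper
  have hii : ∀ f : ℝ → ℝ, ContinuousOn f (Set.Icc 0 ℓ) →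
      IntervalIntegrable f volume 0 ℓ := by
    intro f hf
    exact ContinuousOn.intervalIntegrable (by rwa [hIcc])
  -- ut vanishes at s = 0
  have hut0 : ∀ t ∈ Set.Ici (0:ℝ), ut 0 t = 0 := by
    intro t ht
    have h1 := hut t ht 0 (Set.left_mem_Icc.2 hl0)
    have h2 : HasDerivWithinAt (fun τ => u 0 τ) 0 (Set.Ici 0) t :=
      (hasDerivWithinAt_const t _ (0:ℝ)).congr (fun τ hτ => hbc0 τ hτ) (hbc0 t ht)
    have hU : UniqueDiffWithinAt ℝ (Set.Ici (0:ℝ)) t := uniqueDiffOn_Ici 0 t ht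
    rw [← h1.derivWithin hU, h2.derivWithin hU]
  -- integration by parts, I
  have key1 : ∀ t ∈ Set.Ici (0:ℝ),
      (∫ s in (0:ℝ)..ℓ, (ust s t * (ku s * us s t) + ut s t * q s t)) = 0 := by
    intro t ht
    have hfc : ContinuousOn (fun s => ut s t * (ku s * us s t)) (Set.Icc 0 ℓ) :=
      (hsl _ hut2 t ht).mul (hkuc.mul (hsl _ hus2 t ht))
    have hderiv : ∀ x ∈ Set.Ioo (0:ℝ) ℓ, HasDerivWithinAt
        (fun s => ut s t * (ku s * us s t))
        (ust x t * (ku x * us x t) + ut x t * q x t) (Set.Ioi x) x := by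
      intro x hx
      have hmem : Set.Icc (0:ℝ) ℓ ∈ nhds x := Icc_mem_nhds hx.1 hx.2
      have h1 : HasDerivAt (fun s => ut s t) (ust x t) x :=
        (huts t ht x (Set.Ioo_subset_Icc_self hx)).hasDerivAt hmem
      have h2 : HasDerivAt (fun s => ku s * us s t) (q x t) x :=
        (hq t ht x (Set.Ioo_subset_Icc_self hx)).hasDerivAt hmem
      exact (h1.mul h2).hasDerivWithinAt
    have hint : IntervalIntegrable
        (fun s => ust s t * (ku s * us s t) + ut s t * q s t) volume 0 ℓ :=
      hii _ (((hsl _ hust2 t ht).mul (hkuc.mul (hsl _ hus2 t ht))).add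
        ((hsl _ hut2 t ht).mul (hsl _ hq2 t ht)))
    have heq := integral_eq_sub_of_hasDeriv_right_of_le hl0 hfc hderiv hint
    rw [heq, hbcl t ht, hut0 t ht]
    ring
  -- integration by parts, II
  have key2 : ∀ t ∈ Set.Ici (0:ℝ),
      (∫ s in (0:ℝ)..ℓ, (us s t * (ku s * us s t) + u s t * q s t)) = 0 := by
    intro t ht
    have hfc : ContinuousOn (fun s => u s t * (ku s * us s t)) (Set.Icc 0 ℓ) :=
      (hsl _ hu2 t ht).mul (hkuc.mul (hsl _ hus2 t ht))
    have hderiv : ∀ x ∈ Set.Ioo (0:ℝ) ℓ, HasDerivWithinAt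
        (fun s => u s t * (ku s * us s t))
        (us x t * (ku x * us x t) + u x t * q x t) (Set.Ioi x) x := by
      intro x hx
      have hmem : Set.Icc (0:ℝ) ℓ ∈ nhds x := Icc_mem_nhds hx.1 hx.2
      have h1 : HasDerivAt (fun s => u s t) (us x t) x :=
        (hus t ht x (Set.Ioo_subset_Icc_self hx)).hasDerivAt hmem
      have h2 : HasDerivAt (fun s => ku s * us s t) (q x t) x :=
        (hq t ht x (Set.Ioo_subset_Icc_self hx)).hasDerivAt hmem
      exact (h1.mul h2).hasDerivWithinAt
    have hint : IntervalIntegrable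
        (fun s => us s t * (ku s * us s t) + u s t * q s t) volume 0 ℓ :=
      hii _ (((hsl _ hus2 t ht).mul (hkuc.mul (hsl _ hus2 t ht))).add
        ((hsl _ hu2 t ht).mul (hsl _ hq2 t ht)))
    have heq := integral_eq_sub_of_hasDeriv_right_of_le hl0 hfc hderiv hint
    rw [heq, hbcl t ht, hbc0 t ht]
    ring
  -- constants
  obtain ⟨sa, hsa, hsamin⟩ := isCompact_Icc.exists_isMinOn hne hkuc
  obtain ⟨sA, hsA, hsAmax⟩ := isCompact_Icc.exists_isMaxOn hne hkuc
  obtain ⟨sw, hsw, hswmin⟩ := isCompact_Icc.exists_isMinOn hne hkwc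
  obtain ⟨sW, hsW, hsWmax⟩ := isCompact_Icc.exists_isMaxOn hne hkwc
  obtain ⟨sc, hsc, hscmin⟩ := isCompact_Icc.exists_isMinOn hne hkθc
  obtain ⟨sC, hsC, hsCmax⟩ := isCompact_Icc.exists_isMaxOn hne hkθc
  obtain ⟨a₀, ha₀def⟩ : ∃ x : ℝ, x = ku sa := ⟨_, rfl⟩
  obtain ⟨A, hAdef⟩ : ∃ x : ℝ, x = ku sA := ⟨_, rfl⟩
  obtain ⟨w₀, hw₀def⟩ : ∃ x : ℝ, x = kw sw := ⟨_, rfl⟩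
  obtain ⟨W, hWdef⟩ : ∃ x : ℝ, x = kw sW := ⟨_, rfl⟩
  obtain ⟨c₀, hc₀def⟩ : ∃ x : ℝ, x = kθ sc := ⟨_, rfl⟩
  obtain ⟨C0, hC0def⟩ : ∃ x : ℝ, x = kθ sC := ⟨_, rfl⟩
  have ha₀ : 0 < a₀ := by rw [ha₀def]; exact hkupos sa hsa
  have hA : 0 < A := by rw [hAdef]; exact hkupos sA hsA
  have hw₀ : 0 < w₀ := by rw [hw₀def]; exact hkwpos sw hsw
  have hW : 0 < W := by rw [hWdef]; exact hkwpos sW hsW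
  have hc₀ : 0 < c₀ := by rw [hc₀def]; exact hkθpos sc hsc
  have hC0 : 0 < C0 := by rw [hC0def]; exact hkθpos sC hsC
  have hkua : ∀ s ∈ Set.Icc (0:ℝ) ℓ, a₀ ≤ ku s := by
    intro s hs; rw [ha₀def]; exact isMinOn_iff.mp hsamin s hs
  have hkuA : ∀ s ∈ Set.Icc (0:ℝ) ℓ, ku s ≤ A := by
    intro s hs; rw [hAdef]; exact isMaxOn_iff.mp hsAmax s hs
  have hkww : ∀ s ∈ Set.Icc (0:ℝ) ℓ, w₀ ≤ kw s := by
    intro s hs; rw [hw₀def]; exact isMinOn_iff.mp hswmin s hs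
  have hkwW : ∀ s ∈ Set.Icc (0:ℝ) ℓ, kw s ≤ W := by
    intro s hs; rw [hWdef]; exact isMaxOn_iff.mp hsWmax s hs
  have hkθc₀ : ∀ s ∈ Set.Icc (0:ℝ) ℓ, c₀ ≤ kθ s := by
    intro s hs; rw [hc₀def]; exact isMinOn_iff.mp hscmin s hs
  have hkθC : ∀ s ∈ Set.Icc (0:ℝ) ℓ, kθ s ≤ C0 := by
    intro s hs; rw [hC0def]; exact isMaxOn_iff.mp hsCmax s hs
  -- choice of eps
  obtain ⟨eps, hepsdef⟩ : ∃ x : ℝ, x = min (min (1/2) (c₀/2)) (c₀*w₀/(2*c₀+W^2)) := ⟨_, rfl⟩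
  have heps : 0 < eps := by
    rw [hepsdef]
    apply lt_min (lt_min (by norm_num) (by positivity))
    positivity
  have hεhalf : eps ≤ 1/2 := by
    rw [hepsdef]; exact (min_le_left _ _).trans (min_le_left _ _)
  have hεc : eps ≤ c₀/2 := by
    rw [hepsdef]; exact (min_le_left _ _).trans (min_le_right _ _)
  have hεw : eps * (2*c₀ + W^2) ≤ c₀ * w₀ := by
    have h : eps ≤ c₀*w₀/(2*c₀+W^2) := by rw [hepsdef]; exact min_le_right _ _
    rw [le_div_iff₀ (by positivity)] at h
    exact h
  -- choice of lam
  obtain ⟨lam, hlamdef⟩ : ∃ x : ℝ, x = min (min ((w₀/2)/(2*((1+eps)/2))) ((eps*a₀)/(2*(A/2))))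
      ((eps*c₀/2)/(2*((C0+eps)/2))) := ⟨_, rfl⟩
  have hlam : 0 < lam := by
    rw [hlamdef]
    apply lt_min (lt_min (by positivity) (by positivity))
    positivity
  have hl1 : 2*lam*((1+eps)/2) ≤ w₀/2 := by
    have h2 : lam ≤ (w₀/2)/(2*((1+eps)/2)) := by
      rw [hlamdef]; exact le_trans (min_le_left _ _) (min_le_left _ _)
    rw [le_div_iff₀ (by positivity)] at h2
    linarith
  have hl2 : 2*lam*(A/2) ≤ eps*a₀ := by
    have h2 : lam ≤ (eps*a₀)/(2*(A/2)) := by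
      rw [hlamdef]; exact le_trans (min_le_left _ _) (min_le_right _ _)
    rw [le_div_iff₀ (by positivity)] at h2
    linarith
  have hl3 : 2*lam*((C0+eps)/2) ≤ eps*c₀/2 := by
    have h2 : lam ≤ (eps*c₀/2)/(2*((C0+eps)/2)) := by
      rw [hlamdef]; exact min_le_right _ _
    rw [le_div_iff₀ (by positivity)] at h2
    linarith
  -- energy density and its time derivative
  obtain ⟨F, hFdef⟩ : ∃ F : ℝ → ℝ → ℝ, F = fun s t => ut s t*ut s t/2 + ku s*(us s t*us s t/2)
      + (kθ s*(u s t*u s t/2) + eps*(u s t*ut s t)) := ⟨_, rfl⟩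
  obtain ⟨Ft, hFtdef⟩ : ∃ Ft : ℝ → ℝ → ℝ, Ft = fun s t => (utt s t*ut s t + ut s t*utt s t)/2
      + ku s*((ust s t*us s t + us s t*ust s t)/2)
      + (kθ s*((ut s t*u s t + u s t*ut s t)/2)
      + eps*(ut s t*ut s t + u s t*utt s t)) := ⟨_, rfl⟩
  obtain ⟨L, hLdef⟩ : ∃ L : ℝ → ℝ, L = fun t => ∫ s in (0:ℝ)..ℓ, F s t := ⟨_, rfl⟩
  -- continuity of slices of F and Ft
  have cF : ∀ t ∈ Set.Ici (0:ℝ), ContinuousOn (fun s => F s t) (Set.Icc 0 ℓ) := by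
    intro t ht
    exact ((((hsl _ hut2 t ht).mul (hsl _ hut2 t ht)).div_const 2).add
      ((hkuc.mul ((hsl _ hus2 t ht).mul (hsl _ hus2 t ht))).div_const 2)).add
      (((hkθc.mul ((hsl _ hu2 t ht).mul (hsl _ hu2 t ht))).div_const 2).add
      (((hsl _ hu2 t ht).mul (hsl _ hut2 t ht)).const_smul eps)) |>.congr (fun s hs => by
        simp only [hFdef, smul_eq_mul, Pi.add_apply, Pi.mul_apply, Pi.smul_apply, Pi.pow_apply, Pi.div_apply]; try ring)
  have cFt2 : ContinuousOn (fun z : ℝ × ℝ => Ft z.1 z.2) (Set.Icc 0 ℓ ×ˢ Set.Ici 0) := by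
    have hku2 : ContinuousOn (fun z : ℝ × ℝ => ku z.1) (Set.Icc 0 ℓ ×ˢ Set.Ici 0) :=
      hkuc.comp continuous_fst.continuousOn (fun z hz => hz.1)
    have hkθ2 : ContinuousOn (fun z : ℝ × ℝ => kθ z.1) (Set.Icc 0 ℓ ×ˢ Set.Ici 0) :=
      hkθc.comp continuous_fst.continuousOn (fun z hz => hz.1)
    exact ((((hutt2.mul hut2).add (hut2.mul hutt2)).div_const 2).add
      (hku2.mul (((hust2.mul hus2).add (hus2.mul hust2)).div_const 2))).add
      (((hkθ2.mul (((hut2.mul hu2).add (hu2.mul hut2)).div_const 2))).add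
      (((hut2.mul hut2).add (hu2.mul hutt2)).const_smul eps)) |>.congr (fun z hz => by
        simp only [hFtdef, smul_eq_mul, Pi.add_apply, Pi.mul_apply, Pi.smul_apply, Pi.pow_apply, Pi.div_apply]; try ring)
  have cFt : ∀ t ∈ Set.Ici (0:ℝ), ContinuousOn (fun s => Ft s t) (Set.Icc 0 ℓ) :=
    hsl _ cFt2
  have cFT : ∀ s ∈ Set.Icc (0:ℝ) ℓ, ContinuousOn (fun t => F s t) (Set.Ici 0) := by
    intro s hs
    exact ((((htl _ hut2 s hs).mul (htl _ hut2 s hs)).div_const 2).add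
      (((htl _ hus2 s hs).mul (htl _ hus2 s hs)).div_const 2 |>.const_smul (ku s))).add
      ((((htl _ hu2 s hs).mul (htl _ hu2 s hs)).div_const 2 |>.const_smul (kθ s)).add
      (((htl _ hu2 s hs).mul (htl _ hut2 s hs)).const_smul eps)) |>.congr (fun t ht => by
        simp only [hFdef, smul_eq_mul, Pi.add_apply, Pi.mul_apply, Pi.smul_apply, Pi.pow_apply, Pi.div_apply]; try ring)
  -- derivative of L for t > 0
  have hLderiv : ∀ t₀ : ℝ, 0 < t₀ → HasDerivAt L (∫ s in (0:ℝ)..ℓ, Ft s t₀) t₀ := by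
    intro t₀ ht₀
    have hBsub : Set.Icc (0:ℝ) ℓ ×ˢ Set.Icc (t₀/2) (t₀+1) ⊆ Set.Icc 0 ℓ ×ˢ Set.Ici 0 :=
      Set.prod_mono subset_rfl (Set.Icc_subset_Ici_self.trans (Set.Ici_subset_Ici.2 (by linarith)))
    obtain ⟨M, hM⟩ := (isCompact_Icc.prod isCompact_Icc).exists_bound_of_continuousOn
      (cFt2.mono hBsub)
    set r : ℝ := min (t₀/2) 1 with hrdef
    have hrpos : 0 < r := lt_min (by linarith) one_pos
    have hball : ∀ x ∈ ball t₀ r, x ∈ Set.Icc (t₀/2) (t₀+1) ∧ 0 < x := by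
      intro x hx
      rw [mem_ball, Real.dist_eq, abs_sub_lt_iff] at hx
      have h1 : r ≤ t₀/2 := min_le_left _ _
      have h2 : r ≤ 1 := min_le_right _ _
      exact ⟨⟨by linarith, by linarith⟩, by linarith⟩
    have hmeas : ∀ x ∈ Set.Ici (0:ℝ), AEStronglyMeasurable (fun s => F s x)
        (volume.restrict (Set.uIoc 0 ℓ)) := by
      intro x hx
      rw [hIoc]
      exact ((cF x hx).mono Set.Ioc_subset_Icc_self).aestronglyMeasurable measurableSet_Ioc
    have := intervalIntegral.hasDerivAt_integral_of_dominated_loc_of_deriv_le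
      (F := fun t s => F s t) (F' := fun t s => Ft s t) (x₀ := t₀)
      (a := 0) (b := ℓ) (μ := volume) (bound := fun _ => M) (ball_mem_nhds t₀ hrpos)
      (Filter.eventually_of_mem (Ioi_mem_nhds ht₀) (fun x hx => hmeas x (Set.mem_Ici.2 (le_of_lt (Set.mem_Ioi.1 hx)))))
      (hii _ (cF t₀ ht₀.le))
      (by rw [hIoc]
          exact ((cFt t₀ ht₀.le).mono Set.Ioc_subset_Icc_self).aestronglyMeasurable
            measurableSet_Ioc)
      (by filter_upwards with s hs x hx
          exact hM (s, x) ⟨(Set.Ioc_subset_Icc_self (hIoc ▸ hs)), (hball x hx).1⟩)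
      intervalIntegrable_const
      (by filter_upwards with s hs x hx
          have hsI : s ∈ Set.Icc (0:ℝ) ℓ := Set.Ioc_subset_Icc_self (hIoc ▸ hs)
          have hx0 : (0:ℝ) ≤ x := ((hball x hx).2).le
          have hnx : Set.Ici (0:ℝ) ∈ nhds x := Ici_mem_nhds (hball x hx).2
          have hd_u : HasDerivAt (fun τ => u s τ) (ut s x) x :=
            (hut x hx0 s hsI).hasDerivAt hnx
          have hd_us : HasDerivAt (fun τ => us s τ) (ust s x) x :=
            (hust x hx0 s hsI).hasDerivAt hnx
          have hd_ut : HasDerivAt (fun τ => ut s τ) (utt s x) x :=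
            (hutt x hx0 s hsI).hasDerivAt hnx
          have hbig := (((hd_ut.mul hd_ut).div_const 2).add
            (((hd_us.mul hd_us).div_const 2).const_mul (ku s))).add
            ((((hd_u.mul hd_u).div_const 2).const_mul (kθ s)).add
            ((hd_u.mul hd_ut).const_mul eps))
          rw [hFdef, hFtdef]
          exact hbig)
    rw [hLdef]
    exact this.2
  -- two-variable continuity of F
  have hku2 : ContinuousOn (fun z : ℝ × ℝ => ku z.1) (Set.Icc 0 ℓ ×ˢ Set.Ici 0) :=
    hkuc.comp continuous_fst.continuousOn (fun z hz => hz.1)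
  have hkθ2 : ContinuousOn (fun z : ℝ × ℝ => kθ z.1) (Set.Icc 0 ℓ ×ˢ Set.Ici 0) :=
    hkθc.comp continuous_fst.continuousOn (fun z hz => hz.1)
  have cF2 : ContinuousOn (fun z : ℝ × ℝ => F z.1 z.2) (Set.Icc 0 ℓ ×ˢ Set.Ici 0) := by
    exact (((hut2.mul hut2).div_const 2).add
      (hku2.mul ((hus2.mul hus2).div_const 2))).add
      ((hkθ2.mul ((hu2.mul hu2).div_const 2)).add
      ((hu2.mul hut2).const_smul eps)) |>.congr (fun z hz => by
        simp only [hFdef, smul_eq_mul, Pi.add_apply, Pi.mul_apply, Pi.smul_apply, Pi.pow_apply, Pi.div_apply]; try ring)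
  -- pointwise lower bound of F
  have hFlow : ∀ t ∈ Set.Ici (0:ℝ), ∀ s ∈ Set.Icc (0:ℝ) ℓ,
      (ut s t)^2/4 + a₀/2*(us s t)^2 + c₀/4*(u s t)^2 ≤ F s t := by
    intro t ht s hs
    have h := stmt1_aux_lower (u s t) (ut s t) (us s t) (ku s) (kθ s) a₀ c₀ eps
      (hkua s hs) (hkθc₀ s hs) heps hεhalf hεc
    simp only [hFdef]
    nlinarith [h]
  have hFnn : ∀ t ∈ Set.Ici (0:ℝ), ∀ s ∈ Set.Icc (0:ℝ) ℓ, 0 ≤ F s t := by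
    intro t ht s hs
    have h := hFlow t ht s hs
    have n1 := mul_nonneg ha₀.le (sq_nonneg (us s t))
    have n2 := mul_nonneg hc₀.le (sq_nonneg (u s t))
    linarith [h, n1, n2, sq_nonneg (ut s t)]
  have hLnn : ∀ t ∈ Set.Ici (0:ℝ), 0 ≤ L t := by
    intro t ht
    simp only [hLdef]
    exact intervalIntegral.integral_nonneg hl0 (fun s hs => hFnn t ht s hs)
  -- dissipation inequality
  have hdiss : ∀ t ∈ Set.Ici (0:ℝ), (∫ s in (0:ℝ)..ℓ, Ft s t) ≤ -(2*lam) * L t := by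
    intro t ht
    have i1 : IntervalIntegrable (fun s => ust s t*(ku s*us s t) + ut s t*q s t) volume 0 ℓ :=
      hii _ (((hsl _ hust2 t ht).mul (hkuc.mul (hsl _ hus2 t ht))).add
        ((hsl _ hut2 t ht).mul (hsl _ hq2 t ht)))
    have i2 : IntervalIntegrable (fun s => eps*(us s t*(ku s*us s t) + u s t*q s t)) volume 0 ℓ :=
      hii _ (continuousOn_const.mul (((hsl _ hus2 t ht).mul (hkuc.mul (hsl _ hus2 t ht))).add
        ((hsl _ hu2 t ht).mul (hsl _ hq2 t ht))))
    have gcont : ContinuousOn (fun s => -(kw s*(ut s t*ut s t)) + eps*(ut s t*ut s t)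
        - eps*(kw s*(u s t*ut s t)) - eps*(kθ s*(u s t*u s t)) - eps*(ku s*(us s t*us s t)))
        (Set.Icc 0 ℓ) :=
      (((((hkwc.mul ((hsl _ hut2 t ht).mul (hsl _ hut2 t ht))).neg).add
        (continuousOn_const.mul ((hsl _ hut2 t ht).mul (hsl _ hut2 t ht)))).sub
        (continuousOn_const.mul (hkwc.mul ((hsl _ hu2 t ht).mul (hsl _ hut2 t ht))))).sub
        (continuousOn_const.mul (hkθc.mul ((hsl _ hu2 t ht).mul (hsl _ hu2 t ht))))).sub
        (continuousOn_const.mul (hkuc.mul ((hsl _ hus2 t ht).mul (hsl _ hus2 t ht))))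
    have i3 : IntervalIntegrable (fun s => -(kw s*(ut s t*ut s t)) + eps*(ut s t*ut s t)
        - eps*(kw s*(u s t*ut s t)) - eps*(kθ s*(u s t*u s t)) - eps*(ku s*(us s t*us s t)))
        volume 0 ℓ := hii _ gcont
    have isplit : (∫ s in (0:ℝ)..ℓ, Ft s t)
        = (∫ s in (0:ℝ)..ℓ, (ust s t*(ku s*us s t) + ut s t*q s t))
          + ((∫ s in (0:ℝ)..ℓ, eps*(us s t*(ku s*us s t) + u s t*q s t))
          + (∫ s in (0:ℝ)..ℓ, (-(kw s*(ut s t*ut s t)) + eps*(ut s t*ut s t)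
            - eps*(kw s*(u s t*ut s t)) - eps*(kθ s*(u s t*u s t))
            - eps*(ku s*(us s t*us s t))))) := by
      rw [← intervalIntegral.integral_add i2 i3, ← intervalIntegral.integral_add i1 (i2.add i3)]
      apply intervalIntegral.integral_congr
      intro s hs
      have hs' : s ∈ Set.Icc (0:ℝ) ℓ := hIcc ▸ hs
      have hp := hpde t ht s hs'
      simp only [hFtdef]
      rw [hp]; ring
    have hmono : (∫ s in (0:ℝ)..ℓ, (-(kw s*(ut s t*ut s t)) + eps*(ut s t*ut s t)
        - eps*(kw s*(u s t*ut s t)) - eps*(kθ s*(u s t*u s t)) - eps*(ku s*(us s t*us s t))))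
        ≤ ∫ s in (0:ℝ)..ℓ, -(2*lam) * F s t := by
      apply intervalIntegral.integral_mono_on hl0 i3
        (hii _ (continuousOn_const.mul (cF t ht)))
      intro s hs
      have h := stmt1_aux_main (u s t) (ut s t) (us s t) (ku s) (kw s) (kθ s)
        a₀ w₀ c₀ A W C0 eps lam (hkua s hs) (hkuA s hs) (hkww s hs) (hkwW s hs)
        (hkθc₀ s hs) (hkθC s hs) ha₀ hw₀ hc₀ heps hεw hlam hl1 hl2 hl3
      simp only [hFdef, Pi.mul_apply]
      nlinarith [h]
    have hval : (∫ s in (0:ℝ)..ℓ, Ft s t) = ∫ s in (0:ℝ)..ℓ, (-(kw s*(ut s t*ut s t))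
        + eps*(ut s t*ut s t) - eps*(kw s*(u s t*ut s t)) - eps*(kθ s*(u s t*u s t))
        - eps*(ku s*(us s t*us s t))) := by
      rw [isplit, key1 t ht, intervalIntegral.integral_const_mul, key2 t ht]
      ring
    have hL2 : -(2*lam) * L t = ∫ s in (0:ℝ)..ℓ, -(2*lam) * F s t := by
      simp only [hLdef]
      rw [intervalIntegral.integral_const_mul]
    rw [hval, hL2]
    exact hmono
  -- continuity of L on [0,∞)
  have hLcont : ContinuousOn L (Set.Ici 0) := by
    intro x hx
    rcases eq_or_lt_of_le (Set.mem_Ici.1 hx) with h0 | h0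
    · subst h0
      obtain ⟨M₀, hM₀⟩ := (isCompact_Icc.prod isCompact_Icc).exists_bound_of_continuousOn
        (cF2.mono (Set.prod_mono subset_rfl
          (Set.Icc_subset_Ici_self : Set.Icc (0:ℝ) 1 ⊆ Set.Ici 0)))
      simp only [hLdef]
      apply intervalIntegral.continuousWithinAt_of_dominated_interval
        (bound := fun _ => M₀)
      · exact Filter.eventually_of_mem self_mem_nhdsWithin (fun y hy => by
          rw [hIoc]
          exact ((cF y hy).mono Set.Ioc_subset_Icc_self).aestronglyMeasurable measurableSet_Ioc)
      · have h01 : Set.Icc (0:ℝ) 1 ∈ nhdsWithin 0 (Set.Ici 0) :=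
          mem_nhdsWithin.2 ⟨Set.Iio 1, isOpen_Iio, by norm_num,
            fun y hy => ⟨hy.2, le_of_lt hy.1⟩⟩
        filter_upwards [h01] with y hy
        filter_upwards with s
        intro hsI
        exact hM₀ (s, y) ⟨Set.Ioc_subset_Icc_self (hIoc ▸ hsI), hy⟩
      · exact intervalIntegrable_const
      · filter_upwards with s
        intro hsI
        exact (cFT s (Set.Ioc_subset_Icc_self (hIoc ▸ hsI))) 0 Set.self_mem_Ici
    · exact ((hLderiv x h0).continuousAt).continuousWithinAt
  -- Gronwall via antitonicity
  have hG : ∀ x : ℝ, 0 < x → HasDerivAt (fun t => L t * Real.exp (2*lam*t))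
      ((∫ s in (0:ℝ)..ℓ, Ft s x) * Real.exp (2*lam*x)
        + L x * (Real.exp (2*lam*x) * (2*lam))) x := by
    intro x hx
    have h1 : HasDerivAt (fun t : ℝ => 2*lam*t) (2*lam) x := by
      simpa using (hasDerivAt_id x).const_mul (2*lam)
    exact (hLderiv x hx).mul h1.exp
  have hGanti : AntitoneOn (fun t => L t * Real.exp (2*lam*t)) (Set.Ici 0) := by
    apply antitoneOn_of_deriv_nonpos (convex_Ici 0)
    · exact hLcont.mul ((Real.continuous_exp.comp (continuous_const.mul continuous_id)).continuousOn)
    · rw [interior_Ici]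
      intro x hx
      exact ((hG x hx).differentiableAt).differentiableWithinAt
    · rw [interior_Ici]
      intro x hx
      rw [(hG x hx).deriv]
      have hd := hdiss x (Set.mem_Ici.2 (le_of_lt (Set.mem_Ioi.1 hx)))
      have he := Real.exp_pos (2*lam*x)
      have h3 : ((∫ s in (0:ℝ)..ℓ, Ft s x) + 2*lam*L x) * Real.exp (2*lam*x)
          ≤ 0 * Real.exp (2*lam*x) :=
        mul_le_mul_of_nonneg_right (by linarith) he.le
      rw [zero_mul] at h3
      nlinarith [h3]
  have hdecayG : ∀ t ∈ Set.Ici (0:ℝ), L t * Real.exp (2*lam*t) ≤ L 0 := by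
    intro t ht
    have h := hGanti Set.self_mem_Ici ht ht
    simpa using h
  -- final bound helper
  have hfin : ∀ (f : ℝ → ℝ → ℝ) (c : ℝ), 0 < c →
      (∀ t ∈ Set.Ici (0:ℝ), ContinuousOn (fun s => f s t) (Set.Icc 0 ℓ)) →
      (∀ t ∈ Set.Ici (0:ℝ), ∀ s ∈ Set.Icc (0:ℝ) ℓ, c * (f s t)^2 ≤ F s t) →
      ∀ t ∈ Set.Ici (0:ℝ), L2norm ℓ (fun s => f s t) ≤
        Real.sqrt (L 0 / c) * Real.exp (-lam*t) := by
    intro f c hc hcnt hle t ht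
    have h1 : c * (∫ s in (0:ℝ)..ℓ, (f s t)^2) ≤ L t := by
      rw [← intervalIntegral.integral_const_mul]
      simp only [hLdef]
      exact intervalIntegral.integral_mono_on hl0
        (hii _ (continuousOn_const.mul ((hcnt t ht).pow 2))) (hii _ (cF t ht)) (hle t ht)
    have h2 : L t ≤ L 0 * (Real.exp (-lam*t) * Real.exp (-lam*t)) := by
      have h3 := hdecayG t ht
      have h4 : Real.exp (2*lam*t) * (Real.exp (-lam*t) * Real.exp (-lam*t)) = 1 := by
        rw [← Real.exp_add, ← Real.exp_add, ← Real.exp_zero]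
        ring_nf
      calc L t = L t * Real.exp (2*lam*t) * (Real.exp (-lam*t) * Real.exp (-lam*t)) := by
            rw [mul_assoc, h4, mul_one]
        _ ≤ L 0 * (Real.exp (-lam*t) * Real.exp (-lam*t)) :=
            mul_le_mul_of_nonneg_right h3 (by positivity)
    have h5 : (∫ s in (0:ℝ)..ℓ, (f s t)^2)
        ≤ (L 0 / c) * (Real.exp (-lam*t) * Real.exp (-lam*t)) := by
      rw [div_mul_eq_mul_div, le_div_iff₀ hc]
      nlinarith [h1, h2]
    have hnn : (0:ℝ) ≤ L 0 / c := div_nonneg (hLnn 0 Set.self_mem_Ici) hc.le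
    unfold L2norm
    calc Real.sqrt (∫ s in (0:ℝ)..ℓ, (f s t)^2)
        ≤ Real.sqrt ((L 0 / c) * (Real.exp (-lam*t) * Real.exp (-lam*t))) :=
          Real.sqrt_le_sqrt h5
      _ = Real.sqrt (L 0 / c) * Real.exp (-lam*t) := by
          rw [Real.sqrt_mul hnn, Real.sqrt_mul_self (Real.exp_nonneg _)]
  -- the three pointwise bounds
  have hb1 : ∀ t ∈ Set.Ici (0:ℝ), ∀ s ∈ Set.Icc (0:ℝ) ℓ, (c₀/4) * (u s t)^2 ≤ F s t := by
    intro t ht s hs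
    have h := hFlow t ht s hs
    nlinarith [sq_nonneg (ut s t), mul_nonneg ha₀.le (sq_nonneg (us s t))]
  have hb2 : ∀ t ∈ Set.Ici (0:ℝ), ∀ s ∈ Set.Icc (0:ℝ) ℓ, (1/4) * (ut s t)^2 ≤ F s t := by
    intro t ht s hs
    have h := hFlow t ht s hs
    nlinarith [mul_nonneg hc₀.le (sq_nonneg (u s t)), mul_nonneg ha₀.le (sq_nonneg (us s t))]
  have hb3 : ∀ t ∈ Set.Ici (0:ℝ), ∀ s ∈ Set.Icc (0:ℝ) ℓ, (a₀/2) * (us s t)^2 ≤ F s t := by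
    intro t ht s hs
    have h := hFlow t ht s hs
    nlinarith [mul_nonneg hc₀.le (sq_nonneg (u s t)), sq_nonneg (ut s t)]
  -- conclusion
  refine ⟨Real.sqrt (L 0/(c₀/4)) + Real.sqrt (L 0/(1/4)) + Real.sqrt (L 0/(a₀/2)) + 1,
    by positivity, lam, hlam, ?_⟩
  intro t ht
  have g1 := hfin u (c₀/4) (by positivity) (fun t ht => hsl _ hu2 t ht) hb1 t ht
  have g2 := hfin ut (1/4) (by norm_num) (fun t ht => hsl _ hut2 t ht) hb2 t ht
  have g3 := hfin us (a₀/2) (by positivity) (fun t ht => hsl _ hus2 t ht) hb3 t ht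
  have he := Real.exp_pos (-lam*t)
  linarith [g1, g2, g3, he]
end
end

section
/- Let ℓ > 0, let k_u ∈ C¹([0,ℓ]) and k_w, k_θ ∈ C⁰([0,ℓ]) be strictly positive, and let u : [0,ℓ]×[0,∞) → ℝ be a C³ function satisfying u_tt = (k_u u_s)_s − k_w u_t − k_θ u with boundary conditions u(0,t) = 0 and u_s(ℓ,t) = 0 for all t ≥ 0. Then there exist constants C > 0 and λ > 0 such that ‖u(·,t)‖_{L∞} + ‖u_t(·,t)‖_{L∞} ≤ C e^{−λt} for all t ≥ 0. -/
open Set MeasureTheory intervalIntegral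

namespace Stmt2Aux
-- (assume aux+alg compiled; here just develop decay_main against them)



/-- Slice a jointly continuous function at a fixed time. -/
lemma sliceT {f : ℝ → ℝ → ℝ} {ℓ : ℝ}
    (hf : ContinuousOn (fun z : ℝ × ℝ => f z.1 z.2) (Set.Icc 0 ℓ ×ˢ Set.Ici 0))
    {t : ℝ} (ht : t ∈ Set.Ici (0:ℝ)) :
    ContinuousOn (fun s => f s t) (Set.Icc 0 ℓ) := by
  have hc : ContinuousOn (fun s : ℝ => ((s, t) : ℝ × ℝ)) (Set.Icc 0 ℓ) :=
    (continuous_id.prodMk continuous_const).continuousOn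
  exact hf.comp hc (fun s hs => ⟨hs, ht⟩)

/-- Slice a jointly continuous function at a fixed space point. -/
lemma sliceS {f : ℝ → ℝ → ℝ} {ℓ : ℝ}
    (hf : ContinuousOn (fun z : ℝ × ℝ => f z.1 z.2) (Set.Icc 0 ℓ ×ˢ Set.Ici 0))
    {s : ℝ} (hs : s ∈ Set.Icc (0:ℝ) ℓ) :
    ContinuousOn (fun t => f s t) (Set.Ici 0) := by
  have hc : ContinuousOn (fun t : ℝ => ((s, t) : ℝ × ℝ)) (Set.Ici 0) :=
    (continuous_const.prodMk continuous_id).continuousOn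
  exact hf.comp hc (fun t ht => ⟨hs, ht⟩)

/-- FTC on `[0, x] ⊆ [0, ℓ]` for a function with a one-sided derivative on `[0, ℓ]`. -/
lemma ftc_icc {ℓ : ℝ} {f f' : ℝ → ℝ}
    (hd : ∀ y ∈ Set.Icc (0:ℝ) ℓ, HasDerivWithinAt f (f' y) (Set.Icc 0 ℓ) y)
    (hc' : ContinuousOn f' (Set.Icc 0 ℓ)) {x : ℝ} (hx : x ∈ Set.Icc (0:ℝ) ℓ) :
    ∫ y in (0:ℝ)..x, f' y = f x - f 0 := by
  apply integral_eq_sub_of_hasDeriv_right_of_le hx.1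
  · have hcf : ContinuousOn f (Set.Icc 0 ℓ) := fun y hy => (hd y hy).continuousWithinAt
    exact hcf.mono (Icc_subset_Icc le_rfl hx.2)
  · intro y hy
    have hyl : y ∈ Set.Icc (0:ℝ) ℓ := ⟨hy.1.le, (hy.2.trans_le hx.2).le⟩
    have : HasDerivAt f (f' y) y :=
      (hd y hyl).hasDerivAt (Icc_mem_nhds hy.1 (hy.2.trans_le hx.2))
    exact this.hasDerivWithinAt
  · apply ContinuousOn.intervalIntegrable
    rw [Set.uIcc_of_le hx.1]
    exact hc'.mono (Icc_subset_Icc le_rfl hx.2)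

/-- Differentiation under the interval integral for a parametrized family, at `t₀ > 0`. -/
lemma hasDerivAt_param_integral {ℓ x : ℝ} (hx : x ∈ Set.Icc (0:ℝ) ℓ)
    {G Gt : ℝ → ℝ → ℝ}
    (hGc : ContinuousOn (fun z : ℝ × ℝ => G z.1 z.2) (Set.Icc 0 ℓ ×ˢ Set.Ici 0))
    (hGtc : ContinuousOn (fun z : ℝ × ℝ => Gt z.1 z.2) (Set.Icc 0 ℓ ×ˢ Set.Ici 0))
    (hd : ∀ s ∈ Set.Icc (0:ℝ) ℓ, ∀ τ ∈ Set.Ioi (0:ℝ), HasDerivAt (fun τ => G s τ) (Gt s τ) τ)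
    {t₀ : ℝ} (ht₀ : 0 < t₀) :
    HasDerivAt (fun τ => ∫ s in (0:ℝ)..x, G s τ) (∫ s in (0:ℝ)..x, Gt s t₀) t₀ := by
  have hιsub : Set.uIoc (0:ℝ) x ⊆ Set.Icc 0 ℓ := by
    rw [Set.uIoc_of_le hx.1]
    exact (Set.Ioc_subset_Icc_self).trans (Icc_subset_Icc le_rfl hx.2)
  -- bound on a compact time window
  have hQsub : Set.Icc (0:ℝ) ℓ ×ˢ Set.Icc (t₀/2) (t₀ + t₀/2) ⊆ Set.Icc 0 ℓ ×ˢ Set.Ici 0 := by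
    refine Set.prod_mono le_rfl ?_
    exact Set.Icc_subset_Ici_self.trans (by intro z hz; exact le_trans (by positivity : (0:ℝ) ≤ t₀/2) hz)
  obtain ⟨M, hM⟩ := (isCompact_Icc.prod isCompact_Icc).exists_bound_of_continuousOn
    (hGtc.mono hQsub)
  have hball : ∀ τ ∈ Metric.ball t₀ (t₀/2), τ ∈ Set.Icc (t₀/2) (t₀ + t₀/2) := by
    intro τ hτ
    rw [Metric.mem_ball, Real.dist_eq, abs_sub_lt_iff] at hτ
    constructor <;> linarith [hτ.1, hτ.2]
  have hballpos : ∀ τ ∈ Metric.ball t₀ (t₀/2), 0 < τ := by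
    intro τ hτ; have := (hball τ hτ).1; linarith
  have key := intervalIntegral.hasDerivAt_integral_of_dominated_loc_of_deriv_le
    (F := fun τ s => G s τ) (F' := fun τ s => Gt s τ) (a := 0) (b := x)
    (μ := volume) (x₀ := t₀) (bound := fun _ => M) (Metric.ball_mem_nhds t₀ (by positivity : 0 < t₀/2))
    ?_ ?_ ?_ ?_ ?_ ?_
  · exact key.2
  · filter_upwards [isOpen_Ioi.mem_nhds ht₀] with τ hτ
    exact (((sliceT hGc (Set.mem_Ici.2 (le_of_lt hτ))).mono hιsub).aestronglyMeasurable
      measurableSet_uIoc)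
  · apply ContinuousOn.intervalIntegrable
    rw [Set.uIcc_of_le hx.1]
    exact (sliceT hGc (le_of_lt ht₀)).mono (Icc_subset_Icc le_rfl hx.2)
  · exact ((sliceT hGtc (le_of_lt ht₀)).mono hιsub).aestronglyMeasurable measurableSet_uIoc
  · apply ae_of_all
    intro s hs τ hτ
    exact hM (s, τ) ⟨hιsub hs, hball τ hτ⟩
  · exact intervalIntegrable_const
  · apply ae_of_all
    intro s hs τ hτ
    exact hd s (hιsub hs) τ (hballpos τ hτ)

/-- Continuity of the parametrized integral on `[0, ∞)`. -/
lemma continuousOn_param_integral {ℓ : ℝ} (hℓ : 0 < ℓ)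
    {G : ℝ → ℝ → ℝ}
    (hGc : ContinuousOn (fun z : ℝ × ℝ => G z.1 z.2) (Set.Icc 0 ℓ ×ˢ Set.Ici 0)) :
    ContinuousOn (fun τ => ∫ s in (0:ℝ)..ℓ, G s τ) (Set.Ici 0) := by
  intro t₀ ht₀
  have hιsub : Set.uIoc (0:ℝ) ℓ ⊆ Set.Icc 0 ℓ := by
    rw [Set.uIoc_of_le hℓ.le]; exact Set.Ioc_subset_Icc_self
  have hQsub : Set.Icc (0:ℝ) ℓ ×ˢ Set.Icc 0 (t₀ + 1) ⊆ Set.Icc 0 ℓ ×ˢ Set.Ici 0 :=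
    Set.prod_mono le_rfl Set.Icc_subset_Ici_self
  obtain ⟨M, hM⟩ := (isCompact_Icc.prod isCompact_Icc).exists_bound_of_continuousOn
    (hGc.mono hQsub)
  apply intervalIntegral.continuousWithinAt_of_dominated_interval
    (bound := fun _ => M) (μ := volume)
  · filter_upwards [self_mem_nhdsWithin] with τ hτ
    exact ((sliceT hGc hτ).mono hιsub).aestronglyMeasurable measurableSet_uIoc
  · have hmem : Set.Ici (0:ℝ) ∩ Set.Iio (t₀+1) ∈ nhdsWithin t₀ (Set.Ici 0) := by
      apply Filter.inter_mem self_mem_nhdsWithin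
      exact nhdsWithin_le_nhds (Iio_mem_nhds (by linarith))
    filter_upwards [hmem] with τ hτ
    apply ae_of_all
    intro s hs
    exact hM (s, τ) ⟨hιsub hs, hτ.1, hτ.2.le⟩
  · exact intervalIntegrable_const
  · apply ae_of_all
    intro s hs
    exact ((sliceS hGc (hιsub hs)) t₀ ht₀)

/-- Gronwall-type decay. -/
lemma gronwall {f f' : ℝ → ℝ} {lam : ℝ} (hlam : 0 ≤ lam)
    (hc : ContinuousOn f (Set.Ici 0))
    (hd : ∀ t ∈ Set.Ioi (0:ℝ), HasDerivAt f (f' t) t)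
    (hineq : ∀ t ∈ Set.Ioi (0:ℝ), f' t + lam * f t ≤ 0) :
    ∀ t ∈ Set.Ici (0:ℝ), f t ≤ f 0 * Real.exp (-lam * t) := by
  have hΦd : ∀ x ∈ Set.Ioi (0:ℝ),
      HasDerivAt (fun t => Real.exp (lam * t) * f t)
        (Real.exp (lam * x) * lam * f x + Real.exp (lam * x) * f' x) x := by
    intro x hx
    have h1 : HasDerivAt (fun t : ℝ => lam * t) lam x := by
      simpa using (hasDerivAt_id x).const_mul lam
    exact (h1.exp.mul (hd x hx))
  have hmono : AntitoneOn (fun t => Real.exp (lam * t) * f t) (Set.Ici 0) := by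
    apply antitoneOn_of_deriv_nonpos (convex_Ici 0)
    · exact (Real.continuous_exp.comp (continuous_const.mul continuous_id)).continuousOn.mul hc
    · intro x hx
      rw [interior_Ici] at hx
      exact (hΦd x hx).differentiableAt.differentiableWithinAt
    · intro x hx
      rw [interior_Ici] at hx
      rw [(hΦd x hx).deriv]
      have h2 := hineq x hx
      have h3 := Real.exp_pos (lam * x)
      nlinarith
  intro t ht
  have h4 := hmono self_mem_Ici ht ht
  simp only [mul_zero, Real.exp_zero, one_mul] at h4
  have h5 : Real.exp (-lam * t) * (Real.exp (lam * t) * f t) ≤ Real.exp (-lam * t) * f 0 :=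
    mul_le_mul_of_nonneg_left h4 (Real.exp_pos _).le
  calc f t = Real.exp (-lam * t) * (Real.exp (lam * t) * f t) := by
        rw [← mul_assoc, ← Real.exp_add]; ring_nf; simp
    _ ≤ Real.exp (-lam * t) * f 0 := h5
    _ = f 0 * Real.exp (-lam * t) := by ring



/-- Pointwise lower bound for the energy density. -/
lemma energy_lower {b m kus kθs ε X Y Z : ℝ}
    (hb : 0 < b) (ha : m ≤ kus) (hm : m ≤ b/2) (h3 : b ≤ kθs)
    (hε : 0 < ε) (hε1 : ε ≤ 1/2) (hεb : ε ≤ b/2) :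
    m * (X^2 + Z^2) ≤ Y^2 + kus * Z^2 + kθs * X^2 + 2*ε*(X*Y) := by
  nlinarith [sq_nonneg (X+Y), sq_nonneg (X-Y), sq_nonneg X, sq_nonneg Y, sq_nonneg Z,
    mul_nonneg (sub_nonneg.2 h3) (sq_nonneg X), mul_nonneg (sub_nonneg.2 ha) (sq_nonneg Z)]

/-- Pointwise decay inequality (energy dissipation beats `lam`-growth). -/
lemma key_ineq {b c K kus kws kθs ε X Y Z VST VTT P : ℝ}
    (hb : 0 < b) (hc : 0 < c) (h1 : c ≤ kws) (h2 : kws ≤ K) (h3 : b ≤ kθs) (h4 : 0 ≤ kus)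
    (hε : 0 < ε) (hε1 : ε ≤ 1/2) (hεc : ε * (3*b + (1+K)^2) ≤ c * b)
    (hVTT : VTT = P - kws * Y - kθs * X) :
    (2*Y*VTT + kus*(2*Z*VST) + kθs*(2*X*Y) + 2*ε*(Y*Y + X*VTT))
      - (2*P*(Y + ε*X) + 2*(kus*Z)*(VST + ε*Z))
      + ε * (Y^2 + kus*Z^2 + kθs*X^2 + 2*ε*(X*Y)) ≤ 0 := by
  subst hVTT
  have hK : 0 < 1 + K := by nlinarith
  have hM : |ε - kws| ≤ 1 + K := abs_le.2 ⟨by linarith, by linarith⟩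
  have habs : 2*(b*(ε-kws))*(X*Y) ≤ (1+K)^2*Y^2 + b^2*X^2 := by
    calc 2*(b*(ε-kws))*(X*Y) ≤ |2*(b*(ε-kws))*(X*Y)| := le_abs_self _
      _ = 2*b*(|ε-kws| * ( |X| * |Y| )) := by
          rw [abs_mul, abs_mul, abs_mul, abs_mul]
          rw [abs_of_nonneg (by norm_num : (0:ℝ) ≤ 2), abs_of_nonneg hb.le]
          ring
      _ ≤ (1+K)^2*Y^2 + b^2*X^2 := by
          nlinarith [sq_nonneg ((1+K)*|Y| - b*|X|), sq_abs X, sq_abs Y,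
            mul_nonneg (abs_nonneg X) (abs_nonneg Y), abs_nonneg (ε - kws),
            mul_nonneg (mul_nonneg hb.le (abs_nonneg X)) (abs_nonneg Y)]
  -- multiply the goal by b
  have hscaled : b * ((2*Y*(P - kws*Y - kθs*X) + kus*(2*Z*VST) + kθs*(2*X*Y)
        + 2*ε*(Y*Y + X*(P - kws*Y - kθs*X)))
      - (2*P*(Y + ε*X) + 2*(kus*Z)*(VST + ε*Z))
      + ε * (Y^2 + kus*Z^2 + kθs*X^2 + 2*ε*(X*Y))) ≤ 0 := by
    have hh : ε * (2*(b*(ε-kws))*(X*Y)) ≤ ε * ((1+K)^2*Y^2 + b^2*X^2) :=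
      mul_le_mul_of_nonneg_left habs hε.le
    nlinarith [hh,
      mul_nonneg (mul_nonneg hε.le hb.le) (mul_nonneg h4 (sq_nonneg Z)),
      mul_nonneg (mul_nonneg hε.le hb.le) (mul_nonneg (sub_nonneg.2 h3) (sq_nonneg X)),
      mul_nonneg (sub_nonneg.2 hεc) (sq_nonneg Y),
      mul_nonneg (mul_nonneg hb.le (sub_nonneg.2 h1)) (sq_nonneg Y),
      mul_nonneg (mul_nonneg hc.le hb.le) (sq_nonneg Y)]
  nlinarith [hscaled, hb]


lemma decay_main (ℓ : ℝ) (hℓ : 0 < ℓ) (ku kw kθ : ℝ → ℝ)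
    (hkuc : ContinuousOn ku (Set.Icc 0 ℓ))
    (hkwc : ContinuousOn kw (Set.Icc 0 ℓ))
    (hkθc : ContinuousOn kθ (Set.Icc 0 ℓ))
    (hkupos : ∀ s ∈ Set.Icc (0:ℝ) ℓ, 0 < ku s)
    (hkwpos : ∀ s ∈ Set.Icc (0:ℝ) ℓ, 0 < kw s)
    (hkθpos : ∀ s ∈ Set.Icc (0:ℝ) ℓ, 0 < kθ s)
    (v vs vt vst vtt p : ℝ → ℝ → ℝ)
    (hvs : ∀ t ∈ Set.Ici (0:ℝ), ∀ s ∈ Set.Icc (0:ℝ) ℓ,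
      HasDerivWithinAt (fun x => v x t) (vs s t) (Set.Icc 0 ℓ) s)
    (hvt : ∀ t ∈ Set.Ici (0:ℝ), ∀ s ∈ Set.Icc (0:ℝ) ℓ,
      HasDerivWithinAt (fun τ => v s τ) (vt s t) (Set.Ici 0) t)
    (hvst : ∀ t ∈ Set.Ici (0:ℝ), ∀ s ∈ Set.Icc (0:ℝ) ℓ,
      HasDerivWithinAt (fun τ => vs s τ) (vst s t) (Set.Ici 0) t)
    (hvts : ∀ t ∈ Set.Ioi (0:ℝ), ∀ s ∈ Set.Icc (0:ℝ) ℓ,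
      HasDerivWithinAt (fun x => vt x t) (vst s t) (Set.Icc 0 ℓ) s)
    (hvtt : ∀ t ∈ Set.Ici (0:ℝ), ∀ s ∈ Set.Icc (0:ℝ) ℓ,
      HasDerivWithinAt (fun τ => vt s τ) (vtt s t) (Set.Ici 0) t)
    (hp : ∀ t ∈ Set.Ioi (0:ℝ), ∀ s ∈ Set.Icc (0:ℝ) ℓ,
      HasDerivWithinAt (fun x => ku x * vs x t) (p s t) (Set.Icc 0 ℓ) s)
    (hvc : ContinuousOn (fun z : ℝ × ℝ => v z.1 z.2) (Set.Icc 0 ℓ ×ˢ Set.Ici 0))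
    (hvsc : ContinuousOn (fun z : ℝ × ℝ => vs z.1 z.2) (Set.Icc 0 ℓ ×ˢ Set.Ici 0))
    (hvtc : ContinuousOn (fun z : ℝ × ℝ => vt z.1 z.2) (Set.Icc 0 ℓ ×ˢ Set.Ici 0))
    (hvstc : ContinuousOn (fun z : ℝ × ℝ => vst z.1 z.2) (Set.Icc 0 ℓ ×ˢ Set.Ici 0))
    (hvttc : ContinuousOn (fun z : ℝ × ℝ => vtt z.1 z.2) (Set.Icc 0 ℓ ×ˢ Set.Ici 0))
    (hpc : ContinuousOn (fun z : ℝ × ℝ => p z.1 z.2) (Set.Icc 0 ℓ ×ˢ Set.Ici 0))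
    (hpde : ∀ t ∈ Set.Ioi (0:ℝ), ∀ s ∈ Set.Icc (0:ℝ) ℓ,
      vtt s t = p s t - kw s * vt s t - kθ s * v s t)
    (hbc0 : ∀ t ∈ Set.Ici (0:ℝ), v 0 t = 0)
    (hbcl : ∀ t ∈ Set.Ici (0:ℝ), vs ℓ t = 0) :
    ∃ C > (0:ℝ), ∃ lam > (0:ℝ), ∀ t ∈ Set.Ici (0:ℝ), ∀ s ∈ Set.Icc (0:ℝ) ℓ,
      |v s t| ≤ C * Real.exp (-lam * t) := by
  have h0mem : (0:ℝ) ∈ Set.Icc (0:ℝ) ℓ := ⟨le_rfl, hℓ.le⟩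
  have hlmem : ℓ ∈ Set.Icc (0:ℝ) ℓ := ⟨hℓ.le, le_rfl⟩
  have hne : (Set.Icc (0:ℝ) ℓ).Nonempty := ⟨0, h0mem⟩
  obtain ⟨sa, hsa, hamin⟩ := isCompact_Icc.exists_isMinOn hne hkuc
  obtain ⟨sb, hsb, hbmin⟩ := isCompact_Icc.exists_isMinOn hne hkθc
  obtain ⟨sc, hsc, hcmin⟩ := isCompact_Icc.exists_isMinOn hne hkwc
  obtain ⟨sK, hsK, hKmax⟩ := isCompact_Icc.exists_isMaxOn hne hkwc
  set a := ku sa with ha_def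
  set b := kθ sb with hb_def
  set c := kw sc with hc_def
  set K := kw sK with hK_def
  have ha : 0 < a := hkupos sa hsa
  have hb : 0 < b := hkθpos sb hsb
  have hc : 0 < c := hkwpos sc hsc
  have hale : ∀ s ∈ Set.Icc (0:ℝ) ℓ, a ≤ ku s := fun s hs => isMinOn_iff.mp hamin s hs
  have hble : ∀ s ∈ Set.Icc (0:ℝ) ℓ, b ≤ kθ s := fun s hs => isMinOn_iff.mp hbmin s hs
  have hcle : ∀ s ∈ Set.Icc (0:ℝ) ℓ, c ≤ kw s := fun s hs => isMinOn_iff.mp hcmin s hs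
  have hKle : ∀ s ∈ Set.Icc (0:ℝ) ℓ, kw s ≤ K := fun s hs => isMaxOn_iff.mp hKmax s hs
  have hden : (0:ℝ) < 3*b + (1+K)^2 := by nlinarith [sq_nonneg (1+K)]
  set ε := min (1/2 : ℝ) (min (b/2) (c*b/(3*b+(1+K)^2) / 2)) with hε_def
  have hε : 0 < ε := by
    refine lt_min (by norm_num) (lt_min (by positivity) (by positivity))
  have hε1 : ε ≤ 1/2 := min_le_left _ _
  have hεb : ε ≤ b/2 := (min_le_right _ _).trans (min_le_left _ _)
  have hεc : ε * (3*b + (1+K)^2) ≤ c * b := by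
    have h : ε ≤ c*b/(3*b+(1+K)^2)/2 :=
      le_trans (min_le_right (1/2 : ℝ) _) (min_le_right (b/2) _)
    calc ε * (3*b+(1+K)^2) ≤ (c*b/(3*b+(1+K)^2)/2) * (3*b+(1+K)^2) :=
          mul_le_mul_of_nonneg_right h hden.le
      _ = c*b/2 := by field_simp
      _ ≤ c*b := by nlinarith [mul_pos hc hb]
  set m := min a (b/2) with hm_def
  have hm : 0 < m := lt_min ha (by positivity)
  set G : ℝ → ℝ → ℝ := fun s t =>
    vt s t^2 + ku s * vs s t^2 + kθ s * v s t^2 + 2*ε*(v s t * vt s t) with hG_def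
  set Gt : ℝ → ℝ → ℝ := fun s t =>
    2*(vt s t*vtt s t) + ku s*(2*(vs s t*vst s t)) + kθ s*(2*(v s t*vt s t))
      + 2*ε*(vt s t*vt s t + v s t*vtt s t) with hGt_def
  set E : ℝ → ℝ := fun t => ∫ s in (0:ℝ)..ℓ, G s t with hE_def
  -- continuity of G, Gt on the strip
  have hkuc2 : ContinuousOn (fun z : ℝ × ℝ => ku z.1) (Set.Icc 0 ℓ ×ˢ Set.Ici 0) :=
    hkuc.comp continuous_fst.continuousOn (fun z hz => hz.1)
  have hkθc2 : ContinuousOn (fun z : ℝ × ℝ => kθ z.1) (Set.Icc 0 ℓ ×ˢ Set.Ici 0) :=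
    hkθc.comp continuous_fst.continuousOn (fun z hz => hz.1)
  have hGc : ContinuousOn (fun z : ℝ × ℝ => G z.1 z.2) (Set.Icc 0 ℓ ×ˢ Set.Ici 0) := by
    simp only [hG_def]
    exact (((hvtc.pow 2).add (hkuc2.mul (hvsc.pow 2))).add (hkθc2.mul (hvc.pow 2))).add
      (continuousOn_const.mul (hvc.mul hvtc))
  have hGtc : ContinuousOn (fun z : ℝ × ℝ => Gt z.1 z.2) (Set.Icc 0 ℓ ×ˢ Set.Ici 0) := by
    simp only [hGt_def]
    exact (((continuousOn_const.mul (hvtc.mul hvttc)).add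
        (hkuc2.mul (continuousOn_const.mul (hvsc.mul hvstc)))).add
        (hkθc2.mul (continuousOn_const.mul (hvc.mul hvtc)))).add
      (continuousOn_const.mul ((hvtc.mul hvtc).add (hvc.mul hvttc)))
  have hd : ∀ s ∈ Set.Icc (0:ℝ) ℓ, ∀ τ ∈ Set.Ioi (0:ℝ),
      HasDerivAt (fun τ => G s τ) (Gt s τ) τ := by
    intro s hs τ hτ
    have hτ' : (0:ℝ) < τ := hτ
    have h1 : HasDerivAt (fun τ => v s τ) (vt s τ) τ :=
      (hvt τ hτ'.le s hs).hasDerivAt (Ici_mem_nhds hτ')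
    have h2 : HasDerivAt (fun τ => vs s τ) (vst s τ) τ :=
      (hvst τ hτ'.le s hs).hasDerivAt (Ici_mem_nhds hτ')
    have h3 : HasDerivAt (fun τ => vt s τ) (vtt s τ) τ :=
      (hvtt τ hτ'.le s hs).hasDerivAt (Ici_mem_nhds hτ')
    have H := (((h3.fun_pow 2).add ((h2.fun_pow 2).const_mul (ku s))).add
        ((h1.fun_pow 2).const_mul (kθ s))).add ((h1.fun_mul h3).const_mul (2*ε))
    simp only [hG_def, hGt_def]
    refine H.congr_deriv ?_
    push_cast
    ring
  have hGI : ∀ t ∈ Set.Ici (0:ℝ), IntervalIntegrable (fun s => G s t) volume 0 ℓ := by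
    intro t ht
    apply ContinuousOn.intervalIntegrable
    rw [Set.uIcc_of_le hℓ.le]
    exact sliceT hGc ht
  have hGtI : ∀ t ∈ Set.Ici (0:ℝ), IntervalIntegrable (fun s => Gt s t) volume 0 ℓ := by
    intro t ht
    apply ContinuousOn.intervalIntegrable
    rw [Set.uIcc_of_le hℓ.le]
    exact sliceT hGtc ht
  have hEd : ∀ t ∈ Set.Ioi (0:ℝ), HasDerivAt E (∫ s in (0:ℝ)..ℓ, Gt s t) t := by
    intro t ht
    exact hasDerivAt_param_integral hlmem hGc hGtc hd ht
  have hEc : ContinuousOn E (Set.Ici 0) := continuousOn_param_integral hℓ hGc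
  have hvt0 : ∀ t ∈ Set.Ici (0:ℝ), vt 0 t = 0 := by
    intro t ht
    have h1 := hvt t ht 0 h0mem
    have h2 : HasDerivWithinAt (fun τ => v 0 τ) 0 (Set.Ici 0) t :=
      (hasDerivWithinAt_const t _ (0:ℝ)).congr (fun τ hτ => hbc0 τ hτ) (hbc0 t ht)
    exact (uniqueDiffOn_Ici 0 t ht).eq_deriv _ h1 h2
  have hkey : ∀ t ∈ Set.Ioi (0:ℝ), (∫ s in (0:ℝ)..ℓ, Gt s t) + ε * E t ≤ 0 := by
    intro t ht
    have ht0 : (0:ℝ) < t := ht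
    have ht' : t ∈ Set.Ici (0:ℝ) := ht0.le
    set W : ℝ → ℝ := fun x => 2*((ku x * vs x t) * (vt x t + ε * v x t)) with hW_def
    set W' : ℝ → ℝ := fun x =>
      2*(p x t*(vt x t + ε*v x t) + (ku x*vs x t)*(vst x t + ε*vs x t)) with hW'_def
    have hWd : ∀ x ∈ Set.Icc (0:ℝ) ℓ, HasDerivWithinAt W (W' x) (Set.Icc 0 ℓ) x := by
      intro x hx
      have hA := hp t ht x hx
      have hB : HasDerivWithinAt (fun x => vt x t + ε * v x t)
          (vst x t + ε * vs x t) (Set.Icc 0 ℓ) x :=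
        (hvts t ht x hx).add ((hvs t ht' x hx).const_mul ε)
      have H := (hA.fun_mul hB).const_mul (2:ℝ)
      simp only [hW_def, hW'_def]
      convert H using 1
    have hW'c : ContinuousOn W' (Set.Icc 0 ℓ) := by
      simp only [hW'_def]
      exact continuousOn_const.mul
        (((sliceT hpc ht').mul ((sliceT hvtc ht').add
            (continuousOn_const.mul (sliceT hvc ht')))).add
          ((hkuc.mul (sliceT hvsc ht')).mul ((sliceT hvstc ht').add
            (continuousOn_const.mul (sliceT hvsc ht')))))
    have hFTC : ∫ x in (0:ℝ)..ℓ, W' x = W ℓ - W 0 := ftc_icc hWd hW'c hlmem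
    have hWℓ : W ℓ = 0 := by simp [hW_def, hbcl t ht']
    have hW0 : W 0 = 0 := by simp [hW_def, hvt0 t ht', hbc0 t ht']
    have hpt : ∀ s ∈ Set.Icc (0:ℝ) ℓ, Gt s t - W' s + ε * G s t ≤ 0 := by
      intro s hs
      have hki := key_ineq (b:=b) (c:=c) (K:=K) (kus:=ku s) (kws:=kw s) (kθs:=kθ s) (ε:=ε)
        (X:=v s t) (Y:=vt s t) (Z:=vs s t) (VST:=vst s t) (VTT:=vtt s t) (P:=p s t)
        hb hc (hcle s hs) (hKle s hs) (hble s hs) (hkupos s hs).le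
        hε hε1 hεc (hpde t ht s hs)
      calc Gt s t - W' s + ε * G s t
          = (2*(vt s t)*(vtt s t) + (ku s)*(2*(vs s t)*(vst s t))
              + (kθ s)*(2*(v s t)*(vt s t)) + 2*ε*((vt s t)*(vt s t) + (v s t)*(vtt s t)))
            - (2*(p s t)*((vt s t) + ε*(v s t)) + 2*((ku s)*(vs s t))*((vst s t) + ε*(vs s t)))
            + ε * ((vt s t)^2 + (ku s)*(vs s t)^2 + (kθ s)*(v s t)^2
              + 2*ε*((v s t)*(vt s t))) := by
            simp only [hG_def, hGt_def, hW'_def]; ring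
        _ ≤ 0 := hki
    have hiW' : IntervalIntegrable W' volume 0 ℓ := by
      apply ContinuousOn.intervalIntegrable
      rw [Set.uIcc_of_le hℓ.le]
      exact hW'c
    have h1 : (∫ s in (0:ℝ)..ℓ, Gt s t) = ∫ s in (0:ℝ)..ℓ, (Gt s t - W' s) := by
      rw [integral_sub (hGtI t ht') hiW', hFTC, hWℓ, hW0]
      ring
    have h2 : (∫ s in (0:ℝ)..ℓ, Gt s t) + ε * E t
        = ∫ s in (0:ℝ)..ℓ, (Gt s t - W' s + ε * G s t) := by
      rw [h1]
      have hEt : E t = ∫ s in (0:ℝ)..ℓ, G s t := rfl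
      rw [hEt, ← intervalIntegral.integral_const_mul,
        ← integral_add ((hGtI t ht').sub hiW') ((hGI t ht').const_mul ε)]
    rw [h2]
    have hmono : (∫ s in (0:ℝ)..ℓ, (Gt s t - W' s + ε * G s t))
        ≤ ∫ _s in (0:ℝ)..ℓ, (0:ℝ) := by
      apply integral_mono_on hℓ.le
        (((hGtI t ht').sub hiW').add ((hGI t ht').const_mul ε)) intervalIntegrable_const
      intro s hs
      exact hpt s hs
    simpa using hmono
  have hEdecay : ∀ t ∈ Set.Ici (0:ℝ), E t ≤ E 0 * Real.exp (-ε * t) :=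
    gronwall hε.le hEc hEd hkey
  -- energy lower bound and Agmon-type estimate
  have hmG : ∀ t ∈ Set.Ici (0:ℝ), ∀ s ∈ Set.Icc (0:ℝ) ℓ,
      m * ((v s t)^2 + (vs s t)^2) ≤ G s t := by
    intro t ht s hs
    have hel := energy_lower (b:=b) (m:=m) (kus:=ku s) (kθs:=kθ s) (ε:=ε)
      (X:=v s t) (Y:=vt s t) (Z:=vs s t)
      hb (le_trans (min_le_left a (b/2)) (hale s hs)) (min_le_right a (b/2)) (hble s hs)
      hε hε1 hεb
    calc m * ((v s t)^2 + (vs s t)^2)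
        ≤ (vt s t)^2 + (ku s)*(vs s t)^2 + (kθ s)*(v s t)^2 + 2*ε*((v s t)*(vt s t)) := by
          have : m * ((v s t)^2 + (vs s t)^2) = m * ((v s t)^2 + (vs s t)^2) := rfl
          nlinarith [hel]
      _ = G s t := by simp only [hG_def]
  have hIv : ∀ t ∈ Set.Ici (0:ℝ),
      IntervalIntegrable (fun s => (v s t)^2 + (vs s t)^2) volume 0 ℓ := by
    intro t ht
    apply ContinuousOn.intervalIntegrable
    rw [Set.uIcc_of_le hℓ.le]
    exact ((sliceT hvc ht).pow 2).add ((sliceT hvsc ht).pow 2)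
  have hElb : ∀ t ∈ Set.Ici (0:ℝ),
      m * (∫ s in (0:ℝ)..ℓ, ((v s t)^2 + (vs s t)^2)) ≤ E t := by
    intro t ht
    have hEt : E t = ∫ s in (0:ℝ)..ℓ, G s t := rfl
    rw [hEt, ← intervalIntegral.integral_const_mul]
    exact integral_mono_on hℓ.le ((hIv t ht).const_mul m) (hGI t ht) (hmG t ht)
  have hEnn : ∀ t ∈ Set.Ici (0:ℝ), 0 ≤ E t := by
    intro t ht
    refine le_trans ?_ (hElb t ht)
    apply mul_nonneg hm.le
    apply intervalIntegral.integral_nonneg hℓ.le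
    intro s hs
    positivity
  have hAg : ∀ t ∈ Set.Ici (0:ℝ), ∀ s ∈ Set.Icc (0:ℝ) ℓ, (v s t)^2 ≤ E t / m := by
    intro t ht s hs
    have hg : ∀ x ∈ Set.Icc (0:ℝ) ℓ,
        HasDerivWithinAt (fun x => (v x t)^2) (2*(v x t * vs x t)) (Set.Icc 0 ℓ) x := by
      intro x hx
      have H := (hvs t ht x hx).fun_pow 2
      refine H.congr_deriv ?_
      push_cast
      ring
    have hg'c : ContinuousOn (fun x => 2*(v x t * vs x t)) (Set.Icc 0 ℓ) :=
      continuousOn_const.mul ((sliceT hvc ht).mul (sliceT hvsc ht))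
    have hFTC := ftc_icc hg hg'c hs
    have h0 : (v 0 t)^2 = 0 := by rw [hbc0 t ht]; ring
    have hsub : Set.Icc (0:ℝ) s ⊆ Set.Icc (0:ℝ) ℓ := Icc_subset_Icc le_rfl hs.2
    have hint1 : IntervalIntegrable (fun y => 2*(v y t * vs y t)) volume 0 s := by
      apply ContinuousOn.intervalIntegrable
      rw [Set.uIcc_of_le hs.1]
      exact hg'c.mono hsub
    have hint2 : IntervalIntegrable (fun y => (v y t)^2 + (vs y t)^2) volume 0 s := by
      apply ContinuousOn.intervalIntegrable
      rw [Set.uIcc_of_le hs.1]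
      exact (((sliceT hvc ht).pow 2).add ((sliceT hvsc ht).pow 2)).mono hsub
    have step1 : (v s t)^2 ≤ ∫ y in (0:ℝ)..s, ((v y t)^2 + (vs y t)^2) := by
      have : (v s t)^2 = ∫ y in (0:ℝ)..s, 2*(v y t * vs y t) := by
        rw [hFTC, h0]; ring
      rw [this]
      apply integral_mono_on hs.1 hint1 hint2
      intro y hy
      nlinarith [sq_nonneg (v y t - vs y t)]
    have step2 : (∫ y in (0:ℝ)..s, ((v y t)^2 + (vs y t)^2))
        ≤ ∫ y in (0:ℝ)..ℓ, ((v y t)^2 + (vs y t)^2) := by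
      apply integral_mono_interval le_rfl hs.1 hs.2 ?_ (hIv t ht)
      apply ae_of_all
      intro y
      positivity
    have step3 : (∫ y in (0:ℝ)..ℓ, ((v y t)^2 + (vs y t)^2)) ≤ E t / m := by
      rw [le_div_iff₀ hm]
      have := hElb t ht
      linarith [this, mul_comm m (∫ y in (0:ℝ)..ℓ, ((v y t)^2 + (vs y t)^2))]
    linarith
  refine ⟨Real.sqrt (E 0 / m) + 1, by positivity, ε/2, by positivity, ?_⟩
  intro t ht s hs
  have hnn : 0 ≤ E 0 / m := div_nonneg (hEnn 0 self_mem_Ici) hm.le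
  have h1 : (v s t)^2 ≤ (E 0 / m) * Real.exp (-ε * t) := by
    have hA := hAg t ht s hs
    have hB := hEdecay t ht
    have hC : E t / m ≤ E 0 * Real.exp (-ε*t) / m := by gcongr
    calc (v s t)^2 ≤ E t / m := hA
      _ ≤ E 0 * Real.exp (-ε*t) / m := hC
      _ = (E 0/m) * Real.exp (-ε*t) := by ring
  have h3 : |v s t| ≤ Real.sqrt ((E 0 / m) * Real.exp (-ε * t)) := by
    rw [← Real.sqrt_sq_eq_abs]
    exact Real.sqrt_le_sqrt h1
  have h4 : Real.sqrt ((E 0/m) * Real.exp (-ε*t))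
      = Real.sqrt (E 0/m) * Real.exp (-(ε/2)*t) := by
    rw [Real.sqrt_mul hnn]
    congr 1
    rw [show -ε*t = (-(ε/2)*t) + (-(ε/2)*t) by ring, Real.exp_add,
      Real.sqrt_mul_self (Real.exp_nonneg _)]
  calc |v s t| ≤ Real.sqrt (E 0/m) * Real.exp (-(ε/2)*t) := by rw [← h4]; exact h3
    _ ≤ (Real.sqrt (E 0/m) + 1) * Real.exp (-(ε/2)*t) := by
        have := Real.exp_pos (-(ε/2)*t)
        nlinarith

end Stmt2Aux

open Set MeasureTheory intervalIntegral Stmt2Aux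
/-- The `L∞` norm (sup of `|f|`) on `[0, ℓ]`. -/
noncomputable def LinfNorm (ℓ : ℝ) (f : ℝ → ℝ) : ℝ :=
  sSup ((fun s => |f s|) '' Set.Icc 0 ℓ)
/-- `L∞` exponential decay of `u` and `u_t` for a `C³` solution of the
damped wave equation `u_tt = (k_u u_s)_s − k_w u_t − k_θ u` with `u(0,t)=0`, `u_s(ℓ,t)=0`. -/
theorem stmt_2 (ℓ : ℝ) (hℓ : 0 < ℓ)
    (ku ku' kw kθ : ℝ → ℝ)
    (hku : ∀ s ∈ Set.Icc (0:ℝ) ℓ, HasDerivWithinAt ku (ku' s) (Set.Icc 0 ℓ) s)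
    (hku'c : ContinuousOn ku' (Set.Icc 0 ℓ))
    (hkwc : ContinuousOn kw (Set.Icc 0 ℓ))
    (hkθc : ContinuousOn kθ (Set.Icc 0 ℓ))
    (hkupos : ∀ s ∈ Set.Icc (0:ℝ) ℓ, 0 < ku s)
    (hkwpos : ∀ s ∈ Set.Icc (0:ℝ) ℓ, 0 < kw s)
    (hkθpos : ∀ s ∈ Set.Icc (0:ℝ) ℓ, 0 < kθ s)
    (u us ut ust utt ustt uttt q qt : ℝ → ℝ → ℝ)
    -- first- and second-order partial derivatives
    (hus : ∀ t ∈ Set.Ici (0:ℝ), ∀ s ∈ Set.Icc (0:ℝ) ℓ,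
      HasDerivWithinAt (fun x => u x t) (us s t) (Set.Icc 0 ℓ) s)
    (hut : ∀ t ∈ Set.Ici (0:ℝ), ∀ s ∈ Set.Icc (0:ℝ) ℓ,
      HasDerivWithinAt (fun τ => u s τ) (ut s t) (Set.Ici 0) t)
    (hust : ∀ t ∈ Set.Ici (0:ℝ), ∀ s ∈ Set.Icc (0:ℝ) ℓ,
      HasDerivWithinAt (fun τ => us s τ) (ust s t) (Set.Ici 0) t)
    (huts : ∀ t ∈ Set.Ici (0:ℝ), ∀ s ∈ Set.Icc (0:ℝ) ℓ,
      HasDerivWithinAt (fun x => ut x t) (ust s t) (Set.Icc 0 ℓ) s)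
    (hutt : ∀ t ∈ Set.Ici (0:ℝ), ∀ s ∈ Set.Icc (0:ℝ) ℓ,
      HasDerivWithinAt (fun τ => ut s τ) (utt s t) (Set.Ici 0) t)
    (hq : ∀ t ∈ Set.Ici (0:ℝ), ∀ s ∈ Set.Icc (0:ℝ) ℓ,
      HasDerivWithinAt (fun x => ku x * us x t) (q s t) (Set.Icc 0 ℓ) s)
    -- third-order partial derivatives (u is C³)
    (huttt : ∀ t ∈ Set.Ici (0:ℝ), ∀ s ∈ Set.Icc (0:ℝ) ℓ,
      HasDerivWithinAt (fun τ => utt s τ) (uttt s t) (Set.Ici 0) t)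
    (hustt : ∀ t ∈ Set.Ici (0:ℝ), ∀ s ∈ Set.Icc (0:ℝ) ℓ,
      HasDerivWithinAt (fun τ => ust s τ) (ustt s t) (Set.Ici 0) t)
    (hutts : ∀ t ∈ Set.Ici (0:ℝ), ∀ s ∈ Set.Icc (0:ℝ) ℓ,
      HasDerivWithinAt (fun x => utt x t) (ustt s t) (Set.Icc 0 ℓ) s)
    (hqt : ∀ t ∈ Set.Ici (0:ℝ), ∀ s ∈ Set.Icc (0:ℝ) ℓ,
      HasDerivWithinAt (fun τ => q s τ) (qt s t) (Set.Ici 0) t)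
    -- continuity of u and its derivatives up to third order
    (hcont : ContinuousOn
      (fun z : ℝ × ℝ => (u z.1 z.2, us z.1 z.2, ut z.1 z.2, ust z.1 z.2, utt z.1 z.2,
        ustt z.1 z.2, uttt z.1 z.2, q z.1 z.2, qt z.1 z.2))
      (Set.Icc 0 ℓ ×ˢ Set.Ici 0))
    -- the damped wave equation
    (hpde : ∀ t ∈ Set.Ici (0:ℝ), ∀ s ∈ Set.Icc (0:ℝ) ℓ,
      utt s t = q s t - kw s * ut s t - kθ s * u s t)
    -- boundary conditions
    (hbc0 : ∀ t ∈ Set.Ici (0:ℝ), u 0 t = 0)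
    (hbcl : ∀ t ∈ Set.Ici (0:ℝ), us ℓ t = 0) :
    ∃ C > (0:ℝ), ∃ lam > (0:ℝ), ∀ t ∈ Set.Ici (0:ℝ),
      LinfNorm ℓ (fun s => u s t) + LinfNorm ℓ (fun s => ut s t)
        ≤ C * Real.exp (-lam * t) := by
  classical
  have h0mem : (0:ℝ) ∈ Set.Icc (0:ℝ) ℓ := ⟨le_rfl, hℓ.le⟩
  have hlmem : ℓ ∈ Set.Icc (0:ℝ) ℓ := ⟨hℓ.le, le_rfl⟩
  set S := Set.Icc (0:ℝ) ℓ ×ˢ Set.Ici (0:ℝ) with hS_def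
  -- continuity of the individual components
  have c_u : ContinuousOn (fun z : ℝ × ℝ => u z.1 z.2) S :=
    continuous_fst.comp_continuousOn hcont
  have c_us : ContinuousOn (fun z : ℝ × ℝ => us z.1 z.2) S :=
    (continuous_fst.comp continuous_snd).comp_continuousOn hcont
  have c_ut : ContinuousOn (fun z : ℝ × ℝ => ut z.1 z.2) S :=
    (continuous_fst.comp (continuous_snd.comp continuous_snd)).comp_continuousOn hcont
  have c_ust : ContinuousOn (fun z : ℝ × ℝ => ust z.1 z.2) S :=
    (continuous_fst.comp (continuous_snd.comp
      (continuous_snd.comp continuous_snd))).comp_continuousOn hcont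
  have c_utt : ContinuousOn (fun z : ℝ × ℝ => utt z.1 z.2) S :=
    (continuous_fst.comp (continuous_snd.comp (continuous_snd.comp
      (continuous_snd.comp continuous_snd)))).comp_continuousOn hcont
  have c_ustt : ContinuousOn (fun z : ℝ × ℝ => ustt z.1 z.2) S :=
    (continuous_fst.comp (continuous_snd.comp (continuous_snd.comp
      (continuous_snd.comp (continuous_snd.comp continuous_snd))))).comp_continuousOn hcont
  have c_uttt : ContinuousOn (fun z : ℝ × ℝ => uttt z.1 z.2) S :=
    (continuous_fst.comp (continuous_snd.comp (continuous_snd.comp (continuous_snd.comp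
      (continuous_snd.comp (continuous_snd.comp continuous_snd)))))).comp_continuousOn hcont
  have c_q : ContinuousOn (fun z : ℝ × ℝ => q z.1 z.2) S :=
    (continuous_fst.comp (continuous_snd.comp (continuous_snd.comp (continuous_snd.comp
      (continuous_snd.comp (continuous_snd.comp
        (continuous_snd.comp continuous_snd))))))).comp_continuousOn hcont
  have c_qt : ContinuousOn (fun z : ℝ × ℝ => qt z.1 z.2) S :=
    (continuous_snd.comp (continuous_snd.comp (continuous_snd.comp (continuous_snd.comp
      (continuous_snd.comp (continuous_snd.comp
        (continuous_snd.comp continuous_snd))))))).comp_continuousOn hcont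
  have hkuc : ContinuousOn ku (Set.Icc 0 ℓ) := fun s hs => (hku s hs).continuousWithinAt
  -- decay for u
  obtain ⟨C₁, hC₁, l₁, hl₁, H₁⟩ :=
    decay_main ℓ hℓ ku kw kθ hkuc hkwc hkθc hkupos hkwpos hkθpos
      u us ut ust utt q hus hut hust
      (fun t ht => huts t (Set.mem_Ici.2 (le_of_lt ht))) hutt (fun t ht => hq t (Set.mem_Ici.2 (le_of_lt ht)))
      c_u c_us c_ut c_ust c_utt c_q
      (fun t ht => hpde t (Set.mem_Ici.2 (le_of_lt ht))) hbc0 hbcl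
  -- boundary conditions for η = u_t
  have hbc0' : ∀ t ∈ Set.Ici (0:ℝ), ut 0 t = 0 := by
    intro t ht
    have h1 := hut t ht 0 h0mem
    have h2 : HasDerivWithinAt (fun τ => u 0 τ) 0 (Set.Ici 0) t :=
      (hasDerivWithinAt_const t _ (0:ℝ)).congr (fun τ hτ => hbc0 τ hτ) (hbc0 t ht)
    exact (uniqueDiffOn_Ici 0 t ht).eq_deriv _ h1 h2
  have hbcl' : ∀ t ∈ Set.Ici (0:ℝ), ust ℓ t = 0 := by
    intro t ht
    have h1 := hust t ht ℓ hlmem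
    have h2 : HasDerivWithinAt (fun τ => us ℓ τ) 0 (Set.Ici 0) t :=
      (hasDerivWithinAt_const t _ (0:ℝ)).congr (fun τ hτ => hbcl τ hτ) (hbcl t ht)
    exact (uniqueDiffOn_Ici 0 t ht).eq_deriv _ h1 h2
  -- differentiated PDE
  have hpde' : ∀ t ∈ Set.Ioi (0:ℝ), ∀ s ∈ Set.Icc (0:ℝ) ℓ,
      uttt s t = qt s t - kw s * utt s t - kθ s * ut s t := by
    intro t ht s hs
    have ht' : t ∈ Set.Ici (0:ℝ) := Set.mem_Ici.2 (le_of_lt ht)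
    have hR : HasDerivWithinAt (fun τ => q s τ - kw s * ut s τ - kθ s * u s τ)
        (qt s t - kw s * utt s t - kθ s * ut s t) (Set.Ici 0) t :=
      ((hqt t ht' s hs).sub ((hutt t ht' s hs).const_mul (kw s))).sub
        ((hut t ht' s hs).const_mul (kθ s))
    have hL := huttt t ht' s hs
    have hL' : HasDerivWithinAt (fun τ => utt s τ)
        (qt s t - kw s * utt s t - kθ s * ut s t) (Set.Ici 0) t :=
      hR.congr (fun τ hτ => hpde τ hτ s hs) (hpde t ht' s hs)
    exact (uniqueDiffOn_Ici 0 t ht').eq_deriv _ hL hL'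
  -- Clairaut: the spatial derivative of `ku * ust` is `qt`
  have hp' : ∀ t ∈ Set.Ioi (0:ℝ), ∀ s ∈ Set.Icc (0:ℝ) ℓ,
      HasDerivWithinAt (fun x => ku x * ust x t) (qt s t) (Set.Icc 0 ℓ) s := by
    intro t ht s hs
    have ht' : t ∈ Set.Ici (0:ℝ) := Set.mem_Ici.2 (le_of_lt ht)
    have ht0 : (0:ℝ) < t := ht
    -- FTC in space for q
    have hFTCq : ∀ τ ∈ Set.Ici (0:ℝ), ∀ x ∈ Set.Icc (0:ℝ) ℓ,
        ∫ y in (0:ℝ)..x, q y τ = ku x * us x τ - ku 0 * us 0 τ := by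
      intro τ hτ x hx
      exact ftc_icc (hq τ hτ) (sliceT c_q hτ) hx
    -- mixed derivative identity at each x
    have hmixed : ∀ x ∈ Set.Icc (0:ℝ) ℓ,
        ku x * ust x t = ku 0 * ust 0 t + ∫ y in (0:ℝ)..x, qt y t := by
      intro x hx
      have hder : HasDerivAt (fun τ => ∫ y in (0:ℝ)..x, q y τ)
          (∫ y in (0:ℝ)..x, qt y t) t :=
        hasDerivAt_param_integral hx c_q c_qt
          (fun sp hsp τ hτ => (hqt τ (Set.mem_Ici.2 (le_of_lt hτ)) sp hsp).hasDerivAt (Ici_mem_nhds hτ)) ht0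
      have hder2 : HasDerivAt (fun τ => ku x * us x τ - ku 0 * us 0 τ)
          (ku x * ust x t - ku 0 * ust 0 t) t :=
        (((hust t ht' x hx).hasDerivAt (Ici_mem_nhds ht0)).const_mul (ku x)).sub
          (((hust t ht' 0 h0mem).hasDerivAt (Ici_mem_nhds ht0)).const_mul (ku 0))
      have hder2' : HasDerivAt (fun τ => ∫ y in (0:ℝ)..x, q y τ)
          (ku x * ust x t - ku 0 * ust 0 t) t := by
        apply hder2.congr_of_eventuallyEq
        filter_upwards [isOpen_Ioi.mem_nhds ht0] with τ hτ
        exact hFTCq τ (Set.mem_Ici.2 (le_of_lt hτ)) x hx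
      have := hder2'.unique hder
      linarith [this]
    -- differentiate the primitive
    haveI : Fact (s ∈ Set.Icc (0:ℝ) ℓ) := ⟨hs⟩
    have hintq : IntervalIntegrable (fun y => qt y t) volume 0 s := by
      apply ContinuousOn.intervalIntegrable
      rw [Set.uIcc_of_le hs.1]
      exact (sliceT c_qt ht').mono (Icc_subset_Icc le_rfl hs.2)
    have hmeas : StronglyMeasurableAtFilter (fun y => qt y t)
        (nhdsWithin s (Set.Icc (0:ℝ) ℓ)) volume :=
      ⟨Set.Icc 0 ℓ, self_mem_nhdsWithin,
        ((sliceT c_qt ht').aestronglyMeasurable measurableSet_Icc)⟩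
    have hint : HasDerivWithinAt (fun x => ∫ y in (0:ℝ)..x, qt y t) (qt s t)
        (Set.Icc 0 ℓ) s :=
      intervalIntegral.integral_hasDerivWithinAt_right hintq hmeas
        ((sliceT c_qt ht') s hs)
    have hres : HasDerivWithinAt (fun x => ku 0 * ust 0 t + ∫ y in (0:ℝ)..x, qt y t)
        (qt s t) (Set.Icc 0 ℓ) s := hint.const_add _
    exact hres.congr (fun y hy => (hmixed y hy)) (hmixed s hs)
  -- decay for u_t
  obtain ⟨C₂, hC₂, l₂, hl₂, H₂⟩ :=
    decay_main ℓ hℓ ku kw kθ hkuc hkwc hkθc hkupos hkwpos hkθpos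
      ut ust utt ustt uttt qt huts hutt hustt (fun t ht => hutts t (Set.mem_Ici.2 (le_of_lt ht))) huttt hp'
      c_ut c_ust c_utt c_ustt c_uttt c_qt hpde' hbc0' hbcl'
  -- combine
  refine ⟨C₁ + C₂, by positivity, min l₁ l₂, lt_min hl₁ hl₂, ?_⟩
  intro t ht
  have hexp : Real.exp (-l₁ * t) ≤ Real.exp (-(min l₁ l₂) * t) := by
    apply Real.exp_le_exp.2
    have h' : min l₁ l₂ ≤ l₁ := min_le_left _ _
    have ht0 : (0:ℝ) ≤ t := ht
    nlinarith [mul_nonneg (sub_nonneg.2 h') ht0]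
  have hexp2 : Real.exp (-l₂ * t) ≤ Real.exp (-(min l₁ l₂) * t) := by
    apply Real.exp_le_exp.2
    have h' : min l₁ l₂ ≤ l₂ := min_le_right _ _
    have ht0 : (0:ℝ) ≤ t := ht
    nlinarith [mul_nonneg (sub_nonneg.2 h') ht0]
  have hb1 : LinfNorm ℓ (fun s => u s t) ≤ C₁ * Real.exp (-(min l₁ l₂) * t) := by
    apply Real.sSup_le
    · rintro y ⟨s, hs, rfl⟩
      calc |u s t| ≤ C₁ * Real.exp (-l₁ * t) := H₁ t ht s hs
        _ ≤ C₁ * Real.exp (-(min l₁ l₂) * t) :=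
            mul_le_mul_of_nonneg_left hexp hC₁.le
    · positivity
  have hb2 : LinfNorm ℓ (fun s => ut s t) ≤ C₂ * Real.exp (-(min l₁ l₂) * t) := by
    apply Real.sSup_le
    · rintro y ⟨s, hs, rfl⟩
      calc |ut s t| ≤ C₂ * Real.exp (-l₂ * t) := H₂ t ht s hs
        _ ≤ C₂ * Real.exp (-(min l₁ l₂) * t) :=
            mul_le_mul_of_nonneg_left hexp2 hC₂.le
    · positivity
  calc LinfNorm ℓ (fun s => u s t) + LinfNorm ℓ (fun s => ut s t)
      ≤ C₁ * Real.exp (-(min l₁ l₂) * t) + C₂ * Real.exp (-(min l₁ l₂) * t) :=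
        add_le_add hb1 hb2
    _ = (C₁ + C₂) * Real.exp (-(min l₁ l₂) * t) := by ring
end

section
/- Let ℓ > 0, let k_u ∈ C¹([0,ℓ]) and k_w, k_θ ∈ C⁰([0,ℓ]) be strictly positive, let c ∈ ℝ be a constant, and let u : [0,ℓ]×[0,∞) → ℝ be a C² function satisfying u_tt = (k_u u_s)_s − k_w u_t − k_θ u with boundary conditions u(0,t) = 0 and u_s(ℓ,t) = 0. Define V₁(t) = (1/2)∫₀^ℓ [k_u u_s² + u_t² + 2c u u_t + k_θ u²](s,t) ds. Then V₁ is differentiable and for all t ≥ 0: dV₁/dt = −∫₀^ℓ [c k_u u_s² + (k_w − c) u_t² + c k_w u u_t + c k_θ u²](s,t) ds. -/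
open MeasureTheory Set intervalIntegral

set_option maxHeartbeats 2000000 in
/-- the Lyapunov derivative identity for the inner-loop error system:
for `V₁(t) = ½∫₀^ℓ k_u u_s² + u_t² + 2cuu_t + k_θu² ds` one has
`dV₁/dt = −∫₀^ℓ c k_u u_s² + (k_w−c)u_t² + c k_w u u_t + c k_θ u² ds`. -/
theorem stmt_3 (ℓ : ℝ) (hℓ : 0 < ℓ) (c : ℝ)
    (ku ku' kw kθ : ℝ → ℝ)
    (hku : ∀ s ∈ Set.Icc (0:ℝ) ℓ, HasDerivWithinAt ku (ku' s) (Set.Icc 0 ℓ) s)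
    (hku'c : ContinuousOn ku' (Set.Icc 0 ℓ))
    (hkwc : ContinuousOn kw (Set.Icc 0 ℓ))
    (hkθc : ContinuousOn kθ (Set.Icc 0 ℓ))
    (hkupos : ∀ s ∈ Set.Icc (0:ℝ) ℓ, 0 < ku s)
    (hkwpos : ∀ s ∈ Set.Icc (0:ℝ) ℓ, 0 < kw s)
    (hkθpos : ∀ s ∈ Set.Icc (0:ℝ) ℓ, 0 < kθ s)
    (u us ut ust utt q : ℝ → ℝ → ℝ)
    (hus : ∀ t ∈ Set.Ici (0:ℝ), ∀ s ∈ Set.Icc (0:ℝ) ℓ,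
      HasDerivWithinAt (fun x => u x t) (us s t) (Set.Icc 0 ℓ) s)
    (hut : ∀ t ∈ Set.Ici (0:ℝ), ∀ s ∈ Set.Icc (0:ℝ) ℓ,
      HasDerivWithinAt (fun τ => u s τ) (ut s t) (Set.Ici 0) t)
    (hust : ∀ t ∈ Set.Ici (0:ℝ), ∀ s ∈ Set.Icc (0:ℝ) ℓ,
      HasDerivWithinAt (fun τ => us s τ) (ust s t) (Set.Ici 0) t)
    (huts : ∀ t ∈ Set.Ici (0:ℝ), ∀ s ∈ Set.Icc (0:ℝ) ℓ,
      HasDerivWithinAt (fun x => ut x t) (ust s t) (Set.Icc 0 ℓ) s)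
    (hutt : ∀ t ∈ Set.Ici (0:ℝ), ∀ s ∈ Set.Icc (0:ℝ) ℓ,
      HasDerivWithinAt (fun τ => ut s τ) (utt s t) (Set.Ici 0) t)
    (hq : ∀ t ∈ Set.Ici (0:ℝ), ∀ s ∈ Set.Icc (0:ℝ) ℓ,
      HasDerivWithinAt (fun x => ku x * us x t) (q s t) (Set.Icc 0 ℓ) s)
    (hcont : ContinuousOn
      (fun z : ℝ × ℝ => (u z.1 z.2, us z.1 z.2, ut z.1 z.2, ust z.1 z.2, utt z.1 z.2, q z.1 z.2))
      (Set.Icc 0 ℓ ×ˢ Set.Ici 0))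
    (hpde : ∀ t ∈ Set.Ici (0:ℝ), ∀ s ∈ Set.Icc (0:ℝ) ℓ,
      utt s t = q s t - kw s * ut s t - kθ s * u s t)
    (hbc0 : ∀ t ∈ Set.Ici (0:ℝ), u 0 t = 0)
    (hbcl : ∀ t ∈ Set.Ici (0:ℝ), us ℓ t = 0) :
    ∀ t ∈ Set.Ici (0:ℝ),
      HasDerivWithinAt
        (fun τ => (1/2) * ∫ s in (0:ℝ)..ℓ,
          (ku s * (us s τ) ^ 2 + (ut s τ) ^ 2 + 2 * c * u s τ * ut s τ + kθ s * (u s τ) ^ 2))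
        (-∫ s in (0:ℝ)..ℓ,
          (c * ku s * (us s t) ^ 2 + (kw s - c) * (ut s t) ^ 2
            + c * kw s * u s t * ut s t + c * kθ s * (u s t) ^ 2))
        (Set.Ici 0) t := by
  -- abbreviations
  set P : Set (ℝ × ℝ) := Set.Icc 0 ℓ ×ˢ Set.Ici 0 with hP
  have hkuc : ContinuousOn ku (Set.Icc 0 ℓ) := fun s hs => (hku s hs).continuousWithinAt
  -- componentwise continuity
  have hcu : ContinuousOn (fun z : ℝ × ℝ => u z.1 z.2) P :=
    continuous_fst.comp_continuousOn hcont
  have hcus : ContinuousOn (fun z : ℝ × ℝ => us z.1 z.2) P :=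
    continuous_fst.comp_continuousOn (continuous_snd.comp_continuousOn hcont)
  have hcut : ContinuousOn (fun z : ℝ × ℝ => ut z.1 z.2) P :=
    continuous_fst.comp_continuousOn (continuous_snd.comp_continuousOn
      (continuous_snd.comp_continuousOn hcont))
  have hcust : ContinuousOn (fun z : ℝ × ℝ => ust z.1 z.2) P :=
    continuous_fst.comp_continuousOn (continuous_snd.comp_continuousOn
      (continuous_snd.comp_continuousOn (continuous_snd.comp_continuousOn hcont)))
  have hcutt : ContinuousOn (fun z : ℝ × ℝ => utt z.1 z.2) P :=
    continuous_fst.comp_continuousOn (continuous_snd.comp_continuousOn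
      (continuous_snd.comp_continuousOn (continuous_snd.comp_continuousOn
        (continuous_snd.comp_continuousOn hcont))))
  have hcq : ContinuousOn (fun z : ℝ × ℝ => q z.1 z.2) P :=
    continuous_snd.comp_continuousOn (continuous_snd.comp_continuousOn
      (continuous_snd.comp_continuousOn (continuous_snd.comp_continuousOn
        (continuous_snd.comp_continuousOn hcont))))
  -- the time derivative of the integrand
  set G : ℝ → ℝ → ℝ := fun s τ => ku s * us s τ * ust s τ + ut s τ * utt s τ
      + c * (ut s τ) ^ 2 + c * u s τ * utt s τ + kθ s * u s τ * ut s τ with hGdef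
  have hkuP : ContinuousOn (fun z : ℝ × ℝ => ku z.1) P :=
    hkuc.comp continuous_fst.continuousOn (fun z hz => hz.1)
  have hkθP : ContinuousOn (fun z : ℝ × ℝ => kθ z.1) P :=
    hkθc.comp continuous_fst.continuousOn (fun z hz => hz.1)
  have hGc : ContinuousOn (fun z : ℝ × ℝ => G z.1 z.2) P := by
    apply ContinuousOn.add
    apply ContinuousOn.add
    apply ContinuousOn.add
    apply ContinuousOn.add
    · exact (hkuP.mul hcus).mul hcust
    · exact hcut.mul hcutt
    · exact ((continuousOn_const (c := c)).mul hcut).mul hcut |>.congr (fun z hz => by simp only [Pi.mul_apply]; ring)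
    · exact (continuousOn_const.mul hcu).mul hcutt
    · exact (hkθP.mul hcu).mul hcut
  -- time slices of G are continuous
  have hGslice : ∀ s ∈ Set.Icc (0:ℝ) ℓ, ContinuousOn (fun τ => G s τ) (Set.Ici 0) := by
    intro s hs
    exact hGc.comp (Continuous.prodMk_right s).continuousOn (fun τ hτ => ⟨hs, hτ⟩)
  -- space slices of G are continuous
  have hGslice' : ∀ τ ∈ Set.Ici (0:ℝ), ContinuousOn (fun s => G s τ) (Set.Icc 0 ℓ) := by
    intro τ hτ
    exact hGc.comp (continuous_id.prodMk continuous_const).continuousOn (fun s hs => ⟨hs, hτ⟩)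
  -- pointwise time derivative of the integrand
  have hderI : ∀ τ ∈ Set.Ici (0:ℝ), ∀ s ∈ Set.Icc (0:ℝ) ℓ,
      HasDerivWithinAt (fun τ => (1/2) * (ku s * (us s τ) ^ 2 + (ut s τ) ^ 2
        + 2 * c * u s τ * ut s τ + kθ s * (u s τ) ^ 2)) (G s τ) (Set.Ici 0) τ := by
    intro τ hτ s hs
    have h1 := hus τ hτ s hs
    have h2 := hut τ hτ s hs
    have h3 := hust τ hτ s hs
    have h4 := hutt τ hτ s hs
    have : HasDerivWithinAt (fun τ => (1/2) * (ku s * (us s τ) ^ 2 + (ut s τ) ^ 2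
        + 2 * c * u s τ * ut s τ + kθ s * (u s τ) ^ 2))
        ((1/2) * ((ku s * (2 * us s τ * ust s τ)) + 2 * ut s τ * utt s τ
          + 2 * c * (ut s τ * ut s τ + u s τ * utt s τ) + kθ s * (2 * u s τ * ut s τ)))
        (Set.Ici 0) τ := by
      apply HasDerivWithinAt.const_mul
      apply HasDerivWithinAt.add
      apply HasDerivWithinAt.add
      apply HasDerivWithinAt.add
      · exact ((h3.pow 2).const_mul (ku s)).congr_deriv (by ring)
      · exact (h4.pow 2).congr_deriv (by ring)
      · exact (((h2.mul h4).const_mul (2*c)).congr (fun x _ => by simp only [Pi.mul_apply]; ring) (by simp only [Pi.mul_apply]; ring)).congr_deriv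
          (by ring)
      · exact ((h2.pow 2).const_mul (kθ s)).congr_deriv (by ring)
    exact this.congr_deriv (by rw [hGdef]; ring)
  -- g : the candidate derivative as a function of time
  set g : ℝ → ℝ := fun τ => ∫ s in (0:ℝ)..ℓ, G s τ with hgdef
  -- FTC in time for each s
  have hFTCt : ∀ τ ∈ Set.Ici (0:ℝ), ∀ s ∈ Set.Icc (0:ℝ) ℓ,
      (1/2) * (ku s * (us s τ) ^ 2 + (ut s τ) ^ 2 + 2 * c * u s τ * ut s τ + kθ s * (u s τ) ^ 2)
      - (1/2) * (ku s * (us s 0) ^ 2 + (ut s 0) ^ 2 + 2 * c * u s 0 * ut s 0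
          + kθ s * (u s 0) ^ 2)
      = ∫ σ in (0:ℝ)..τ, G s σ := by
    intro τ hτ s hs
    have key := intervalIntegral.integral_eq_sub_of_hasDeriv_right_of_le hτ
      (f := fun τ => (1/2) * (ku s * (us s τ) ^ 2 + (ut s τ) ^ 2
        + 2 * c * u s τ * ut s τ + kθ s * (u s τ) ^ 2)) (f' := fun σ => G s σ)
      (fun σ hσ => ((hderI σ hσ.1 s hs).continuousWithinAt).mono Set.Icc_subset_Ici_self)
      (fun σ hσ => (((hderI σ hσ.1.le s hs).hasDerivAt
        (Ici_mem_nhds hσ.1)).hasDerivWithinAt))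
      (((hGslice s hs).mono Set.Icc_subset_Ici_self).intervalIntegrable_of_Icc hτ)
    rw [key]
  -- g is continuous within `Ici 0` at each nonnegative time
  have hgcont : ∀ τ ∈ Set.Ici (0:ℝ), ContinuousWithinAt g (Set.Ici 0) τ := by
    intro τ hτ
    obtain ⟨C, hC⟩ := (IsCompact.exists_bound_of_continuousOn
      (isCompact_Icc.prod isCompact_Icc)
      (hGc.mono (Set.prod_mono (subset_refl _) (Set.Icc_subset_Ici_self : Set.Icc (0:ℝ) (τ + 1) ⊆ Set.Ici 0))))
    apply intervalIntegral.continuousWithinAt_of_dominated_interval (bound := fun _ => C)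
    · filter_upwards [self_mem_nhdsWithin] with x hx
      exact (((hGslice' x hx).mono (by rw [Set.uIoc_of_le hℓ.le]; exact Set.Ioc_subset_Icc_self)
        )).aestronglyMeasurable measurableSet_uIoc
    · have hmem : Set.Iio (τ + 1) ∩ Set.Ici 0 ∈ nhdsWithin τ (Set.Ici 0) :=
        Filter.inter_mem (nhdsWithin_le_nhds (Iio_mem_nhds (by linarith))) self_mem_nhdsWithin
      filter_upwards [hmem] with x hx
      refine Filter.Eventually.of_forall fun σ hσ => ?_
      rw [Set.uIoc_of_le hℓ.le] at hσ
      exact hC (σ, x) ⟨⟨hσ.1.le, hσ.2⟩, ⟨hx.2, hx.1.le⟩⟩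
    · exact intervalIntegrable_const
    · refine Filter.Eventually.of_forall fun σ hσ => ?_
      rw [Set.uIoc_of_le hℓ.le] at hσ
      exact hGslice σ ⟨hσ.1.le, hσ.2⟩ τ hτ
  have hgmeas : AEStronglyMeasurable g (volume.restrict (Set.Ici 0)) := by
    have : ContinuousOn g (Set.Ici 0) := fun τ hτ => hgcont τ hτ
    exact this.aestronglyMeasurable measurableSet_Ici
  -- Fubini + FTC: V τ = V 0 + ∫_0^τ g
  have hVrep : ∀ τ ∈ Set.Ici (0:ℝ),
      (1/2) * (∫ s in (0:ℝ)..ℓ, (ku s * (us s τ) ^ 2 + (ut s τ) ^ 2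
          + 2 * c * u s τ * ut s τ + kθ s * (u s τ) ^ 2))
      = (1/2) * (∫ s in (0:ℝ)..ℓ, (ku s * (us s 0) ^ 2 + (ut s 0) ^ 2
          + 2 * c * u s 0 * ut s 0 + kθ s * (u s 0) ^ 2))
        + ∫ σ in (0:ℝ)..τ, g σ := by
    have hIc : ContinuousOn (fun z : ℝ × ℝ => (1/2) * (ku z.1 * (us z.1 z.2) ^ 2
        + (ut z.1 z.2) ^ 2 + 2 * c * u z.1 z.2 * ut z.1 z.2 + kθ z.1 * (u z.1 z.2) ^ 2)) P := by
      apply ContinuousOn.mul continuousOn_const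
      apply ContinuousOn.add
      apply ContinuousOn.add
      apply ContinuousOn.add
      · exact hkuP.mul (hcus.pow 2)
      · exact hcut.pow 2
      · exact (continuousOn_const.mul hcu).mul hcut
      · exact hkθP.mul (hcu.pow 2)
    have hIslice : ∀ τ ∈ Set.Ici (0:ℝ), ContinuousOn (fun s => (1/2) * (ku s * (us s τ) ^ 2
        + (ut s τ) ^ 2 + 2 * c * u s τ * ut s τ + kθ s * (u s τ) ^ 2)) (Set.Icc 0 ℓ) :=
      fun τ hτ => hIc.comp (continuous_id.prodMk continuous_const).continuousOn
        (fun s hs => ⟨hs, hτ⟩)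
    have hIint : ∀ τ ∈ Set.Ici (0:ℝ), IntervalIntegrable (fun s => (1/2) * (ku s * (us s τ) ^ 2
        + (ut s τ) ^ 2 + 2 * c * u s τ * ut s τ + kθ s * (u s τ) ^ 2)) volume 0 ℓ :=
      fun τ hτ => (hIslice τ hτ).intervalIntegrable_of_Icc hℓ.le
    intro τ hτ
    have hsub : (∫ s in (0:ℝ)..ℓ, ((1/2) * (ku s * (us s τ) ^ 2 + (ut s τ) ^ 2
          + 2 * c * u s τ * ut s τ + kθ s * (u s τ) ^ 2)
        - (1/2) * (ku s * (us s 0) ^ 2 + (ut s 0) ^ 2 + 2 * c * u s 0 * ut s 0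
          + kθ s * (u s 0) ^ 2)))
        = ∫ s in (0:ℝ)..ℓ, ∫ σ in (0:ℝ)..τ, G s σ := by
      apply intervalIntegral.integral_congr
      intro s hs
      rw [Set.uIcc_of_le hℓ.le] at hs
      exact hFTCt τ hτ s hs
    have hswap : (∫ s in (0:ℝ)..ℓ, ∫ σ in (0:ℝ)..τ, G s σ) = ∫ σ in (0:ℝ)..τ, g σ := by
      rw [hgdef]
      simp only [intervalIntegral.integral_of_le hℓ.le, intervalIntegral.integral_of_le hτ]
      apply MeasureTheory.integral_integral_swap
      rw [Measure.prod_restrict]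
      have : IntegrableOn (fun z : ℝ × ℝ => G z.1 z.2) (Set.Icc 0 ℓ ×ˢ Set.Icc 0 τ)
          (volume.prod volume) := by
        rw [← Measure.volume_eq_prod]
        exact (hGc.mono (Set.prod_mono (subset_refl _) Set.Icc_subset_Ici_self)
          ).integrableOn_compact (isCompact_Icc.prod isCompact_Icc)
      exact this.mono_set (Set.prod_mono Set.Ioc_subset_Icc_self Set.Ioc_subset_Icc_self)
    rw [intervalIntegral.integral_sub (hIint τ hτ) (hIint 0 Set.self_mem_Ici)] at hsub
    rw [← intervalIntegral.integral_const_mul, ← intervalIntegral.integral_const_mul]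
    linarith [hsub, hswap]
  intro t ht
  -- identify the stated derivative with g t
  have hgt : g t = -∫ s in (0:ℝ)..ℓ,
      (c * ku s * (us s t) ^ 2 + (kw s - c) * (ut s t) ^ 2
        + c * kw s * u s t * ut s t + c * kθ s * (u s t) ^ 2) := by
    -- time slices at t of each component, in the space variable
    have slice : ∀ f : ℝ → ℝ → ℝ, ContinuousOn (fun z : ℝ × ℝ => f z.1 z.2) P →
        ContinuousOn (fun s => f s t) (Set.Icc 0 ℓ) := fun f hf =>
      hf.comp (continuous_id.prodMk continuous_const).continuousOn (fun s hs => ⟨hs, ht⟩)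
    have hcuT := slice u hcu
    have hcusT := slice us hcus
    have hcutT := slice ut hcut
    have hcustT := slice ust hcust
    have hcqT := slice q hcq
    -- ut 0 t = 0
    have hut0 : ut 0 t = 0 := by
      have hconst : HasDerivWithinAt (fun τ => u 0 τ) 0 (Set.Ici 0) t :=
        (hasDerivWithinAt_const t (Set.Ici 0) (0:ℝ)).congr
          (fun τ hτ => hbc0 τ hτ) (hbc0 t ht)
      have h1 := (hut t ht 0 ⟨le_refl _, hℓ.le⟩).derivWithin (uniqueDiffOn_Ici 0 t ht)
      have h2 := hconst.derivWithin (uniqueDiffOn_Ici 0 t ht)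
      rw [← h1, h2]
    -- integration by parts via FTC in space
    have hB : ∀ s ∈ Set.Icc (0:ℝ) ℓ,
        HasDerivWithinAt (fun s => (ut s t + c * u s t) * (ku s * us s t))
          ((ust s t + c * us s t) * (ku s * us s t) + (ut s t + c * u s t) * q s t)
          (Set.Icc 0 ℓ) s := by
      intro s hs
      exact ((huts t ht s hs).add ((hus t ht s hs).const_mul c)).mul (hq t ht s hs)
        |>.congr_deriv (by simp only [Pi.add_apply])
    have hintc : ContinuousOn (fun s => (ust s t + c * us s t) * (ku s * us s t)
        + (ut s t + c * u s t) * q s t) (Set.Icc 0 ℓ) :=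
      ((hcustT.add (continuousOn_const.mul hcusT)).mul (hkuc.mul hcusT)).add
        ((hcutT.add (continuousOn_const.mul hcuT)).mul hcqT)
    have hzero : (∫ s in (0:ℝ)..ℓ, ((ust s t + c * us s t) * (ku s * us s t)
        + (ut s t + c * u s t) * q s t)) = 0 := by
      rw [intervalIntegral.integral_eq_sub_of_hasDerivAt_of_le hℓ.le
        (fun s hs => (hB s hs).continuousWithinAt)
        (fun s hs => (hB s (Set.Ioo_subset_Icc_self hs)).hasDerivAt
          (Icc_mem_nhds hs.1 hs.2))
        (hintc.intervalIntegrable_of_Icc hℓ.le)]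
      rw [hbcl t ht, hbc0 t ht, hut0]
      ring
    -- combine with the PDE
    have hGint : IntervalIntegrable (fun s => G s t) volume 0 ℓ :=
      (hGslice' t ht).intervalIntegrable_of_Icc hℓ.le
    have hRc : ContinuousOn (fun s => c * ku s * (us s t) ^ 2 + (kw s - c) * (ut s t) ^ 2
        + c * kw s * u s t * ut s t + c * kθ s * (u s t) ^ 2) (Set.Icc 0 ℓ) := by
      apply ContinuousOn.add
      apply ContinuousOn.add
      apply ContinuousOn.add
      · exact (continuousOn_const.mul hkuc).mul (hcusT.pow 2)
      · exact (hkwc.sub continuousOn_const).mul (hcutT.pow 2)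
      · exact ((continuousOn_const.mul hkwc).mul hcuT).mul hcutT
      · exact (continuousOn_const.mul hkθc).mul (hcuT.pow 2)
    have hRint : IntervalIntegrable (fun s => c * ku s * (us s t) ^ 2
        + (kw s - c) * (ut s t) ^ 2 + c * kw s * u s t * ut s t + c * kθ s * (u s t) ^ 2)
        volume 0 ℓ := hRc.intervalIntegrable_of_Icc hℓ.le
    have hsum : (∫ s in (0:ℝ)..ℓ, (G s t + (c * ku s * (us s t) ^ 2
          + (kw s - c) * (ut s t) ^ 2 + c * kw s * u s t * ut s t + c * kθ s * (u s t) ^ 2)))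
        = (∫ s in (0:ℝ)..ℓ, G s t) + ∫ s in (0:ℝ)..ℓ, (c * ku s * (us s t) ^ 2
          + (kw s - c) * (ut s t) ^ 2 + c * kw s * u s t * ut s t + c * kθ s * (u s t) ^ 2) :=
      intervalIntegral.integral_add hGint hRint
    have hcongr : (∫ s in (0:ℝ)..ℓ, (G s t + (c * ku s * (us s t) ^ 2
          + (kw s - c) * (ut s t) ^ 2 + c * kw s * u s t * ut s t + c * kθ s * (u s t) ^ 2)))
        = ∫ s in (0:ℝ)..ℓ, ((ust s t + c * us s t) * (ku s * us s t)
          + (ut s t + c * u s t) * q s t) := by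
      apply intervalIntegral.integral_congr
      intro s hs
      rw [Set.uIcc_of_le hℓ.le] at hs
      have hp := hpde t ht s hs
      simp only [hGdef, hp]
      ring
    rw [hgdef]
    have : (∫ s in (0:ℝ)..ℓ, G s t) + ∫ s in (0:ℝ)..ℓ, (c * ku s * (us s t) ^ 2
        + (kw s - c) * (ut s t) ^ 2 + c * kw s * u s t * ut s t + c * kθ s * (u s t) ^ 2)
        = 0 := by rw [← hsum, hcongr, hzero]
    linarith
  -- derivative of the primitive
  have hprim : HasDerivWithinAt (fun τ => (1/2) * (∫ s in (0:ℝ)..ℓ, (ku s * (us s 0) ^ 2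
        + (ut s 0) ^ 2 + 2 * c * u s 0 * ut s 0 + kθ s * (u s 0) ^ 2))
      + ∫ σ in (0:ℝ)..τ, g σ) (g t) (Set.Ici 0) t := by
    apply HasDerivWithinAt.const_add
    have hgC : ContinuousOn g (Set.Ici 0) := fun σ hσ => hgcont σ hσ
    have hgiv : IntervalIntegrable g volume 0 t :=
      (hgC.mono Set.Icc_subset_Ici_self).intervalIntegrable_of_Icc ht
    rcases eq_or_lt_of_le (Set.mem_Ici.mp ht : (0:ℝ) ≤ t) with h0 | h0
    · subst h0
      exact intervalIntegral.integral_hasDerivWithinAt_right (t := Set.Ioi (0:ℝ)) hgiv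
        ⟨Set.Ioi 0, self_mem_nhdsWithin,
          hgmeas.mono_measure (Measure.restrict_mono Set.Ioi_subset_Ici_self le_rfl)⟩
        ((hgcont 0 Set.self_mem_Ici).mono Set.Ioi_subset_Ici_self)
    · have hnhds : Set.Ici (0:ℝ) ∈ nhds t := Ici_mem_nhds h0
      exact (intervalIntegral.integral_hasDerivAt_right hgiv
        ⟨Set.Ici 0, hnhds, hgmeas⟩ ((hgcont t ht).continuousAt hnhds)).hasDerivWithinAt
  rw [← hgt]
  exact hprim.congr (fun τ hτ => hVrep τ hτ) (hVrep t ht)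
end

section
/- Let k_θ, k_w > 0 and let c be a real number with 0 < c, c² < k_θ, and c < k_θ k_w / (k_θ + k_w²/4). Then both 2×2 symmetric matrices [[1, c], [c, k_θ]] and [[k_w − c, c k_w/2], [c k_w/2, c k_θ]] are positive definite. -/
lemma posDef_fin_two {a b d : ℝ} (ha : 0 < a) (hdet : 0 < a * d - b ^ 2) :
    (!![a, b; b, d] : Matrix (Fin 2) (Fin 2) ℝ).PosDef := by
  rw [Matrix.posDef_iff_dotProduct_mulVec]
  constructor
  · ext i j
    fin_cases i <;> fin_cases j <;>
      simp [Matrix.conjTranspose, Matrix.transpose]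
  · intro x hx
    have h01 : x 0 ≠ 0 ∨ x 1 ≠ 0 := by
      by_contra h
      push_neg at h
      exact hx (funext fun i => by fin_cases i <;> simp [h.1, h.2])
    simp only [dotProduct, Matrix.mulVec, Fin.sum_univ_two, star, Matrix.of_apply, Matrix.cons_val',
      Matrix.cons_val_zero, Matrix.cons_val_one, Matrix.head_cons, Matrix.empty_val',
      Matrix.cons_val_fin_one, Matrix.head_fin_const]
    have hd : 0 < d := by nlinarith [sq_nonneg b]
    rcases h01 with h | h
    · nlinarith [sq_nonneg (b * x 0 + d * x 1), sq_pos_of_ne_zero h]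
    · nlinarith [sq_nonneg (a * x 0 + b * x 1), sq_pos_of_ne_zero h]

/-- the gain condition `0 < c`, `c² < k_θ`,
`c < k_θ k_w/(k_θ + k_w²/4)` makes the two Lyapunov matrices positive definite. -/
theorem stmt_5 (kθ kw c : ℝ) (hkθ : 0 < kθ) (hkw : 0 < kw)
    (hc0 : 0 < c) (hc1 : c ^ 2 < kθ) (hc2 : c < kθ * kw / (kθ + kw ^ 2 / 4)) :
    (!![1, c; c, kθ] : Matrix (Fin 2) (Fin 2) ℝ).PosDef ∧
    (!![kw - c, c * kw / 2; c * kw / 2, c * kθ] : Matrix (Fin 2) (Fin 2) ℝ).PosDef := by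
  have hden : 0 < kθ + kw ^ 2 / 4 := by positivity
  have hc2' : c * (kθ + kw ^ 2 / 4) < kθ * kw := by
    exact (lt_div_iff₀ hden).mp hc2
  constructor
  · exact posDef_fin_two one_pos (by nlinarith)
  · refine posDef_fin_two ?_ ?_
    · nlinarith
    · nlinarith
end

section
/- Let ℓ > 0, let K_q ∈ C¹([0,ℓ]) and K_p ∈ C⁰([0,ℓ]) be symmetric 2×2 matrix fields, let K_v : [0,ℓ]×[0,∞) → ℝ^{2×2} be continuous symmetric, let Φ be C¹ symmetric-valued with K_q + Φ of class C¹ in s, let Ψ be continuous, let C be a constant symmetric 2×2 matrix with CK_p symmetric, and let p̃ : [0,ℓ]×[0,∞) → ℝ² be a C² solution of p̃_tt = ((K_q + Φ) p̃_s)_s − K_v p̃_t − K_p p̃ + Ψ with p̃(0,t) = 0 and p̃_s(ℓ,t) = 0. Define V₂(t) = (1/2)∫₀^ℓ [p̃_sᵀ(K_q + Φ)p̃_s + p̃_tᵀp̃_t + 2p̃ᵀCp̃_t + p̃ᵀK_pp̃] ds. Then V₂ is differentiable and dV₂/dt = ∫₀^ℓ [ −p̃_sᵀ(CK_q + CΦ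 − (1/2)Φ_t)p̃_s + (p̃_t + Cp̃)ᵀΨ − ( p̃_tᵀ(K_v − C)p̃_t + p̃_tᵀK_vCp̃ + p̃ᵀCK_pp̃ ) ] ds. -/
open Matrix MeasureTheory Set

set_option maxHeartbeats 1000000

private lemma hdw_dot {u v : ℝ → Fin 2 → ℝ} {u' v' : Fin 2 → ℝ} {S : Set ℝ} {x : ℝ}
    (hu : HasDerivWithinAt u u' S x) (hv : HasDerivWithinAt v v' S x) :
    HasDerivWithinAt (fun y => u y ⬝ᵥ v y) (u' ⬝ᵥ v x + u x ⬝ᵥ v') S x := by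
  have hu' := hasDerivWithinAt_pi.1 hu
  have hv' := hasDerivWithinAt_pi.1 hv
  have h := ((hu' 0).mul (hv' 0)).add ((hu' 1).mul (hv' 1))
  have e : ∀ (a b : Fin 2 → ℝ), a ⬝ᵥ b = a 0 * b 0 + a 1 * b 1 := fun a b => by
    simp [dotProduct, Fin.sum_univ_two]
  have e2 : u' ⬝ᵥ v x + u x ⬝ᵥ v' =
      u' 0 * v x 0 + u x 0 * v' 0 + (u' 1 * v x 1 + u x 1 * v' 1) := by
    simp only [e]; ring
  rw [e2]
  simp only [e]
  exact h

private lemma hdw_mulVec {M : ℝ → Matrix (Fin 2) (Fin 2) ℝ} {M' : Matrix (Fin 2) (Fin 2) ℝ}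
    {v : ℝ → Fin 2 → ℝ} {v' : Fin 2 → ℝ} {S : Set ℝ} {x : ℝ}
    (hM : ∀ i j, HasDerivWithinAt (fun y => M y i j) (M' i j) S x)
    (hv : HasDerivWithinAt v v' S x) :
    HasDerivWithinAt (fun y => M y *ᵥ v y) (M' *ᵥ v x + M x *ᵥ v') S x := by
  rw [hasDerivWithinAt_pi]
  intro i
  have hv' := hasDerivWithinAt_pi.1 hv
  have e : ∀ (A : Matrix (Fin 2) (Fin 2) ℝ) (b : Fin 2 → ℝ) (i : Fin 2),
      (A *ᵥ b) i = A i 0 * b 0 + A i 1 * b 1 := fun A b i => by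
    simp [Matrix.mulVec, dotProduct, Fin.sum_univ_two]
  have h := ((hM i 0).mul (hv' 0)).add ((hM i 1).mul (hv' 1))
  have e2 : (M' *ᵥ v x + M x *ᵥ v') i =
      M' i 0 * v x 0 + M x i 0 * v' 0 + (M' i 1 * v x 1 + M x i 1 * v' 1) := by
    simp only [Pi.add_apply, e]; ring
  rw [e2]
  simp only [e]
  exact h

private lemma hdw_cmulVec (A : Matrix (Fin 2) (Fin 2) ℝ) {v : ℝ → Fin 2 → ℝ} {v' : Fin 2 → ℝ}
    {S : Set ℝ} {x : ℝ} (hv : HasDerivWithinAt v v' S x) :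
    HasDerivWithinAt (fun y => A *ᵥ v y) (A *ᵥ v') S x := by
  have h := hdw_mulVec (M := fun _ => A) (M' := 0)
    (fun i j => by simpa using hasDerivWithinAt_const x S (A i j)) hv
  simpa using h

private lemma con_pi {α : Type*} [TopologicalSpace α] {v : α → Fin 2 → ℝ} {s : Set α}
    (h : ContinuousOn v s) (i : Fin 2) : ContinuousOn (fun x => v x i) s :=
  (continuous_apply i).comp_continuousOn h

private lemma con_entry {α : Type*} [TopologicalSpace α] {M : α → Matrix (Fin 2) (Fin 2) ℝ}
    {s : Set α} (h : ContinuousOn M s) (i j : Fin 2) : ContinuousOn (fun x => M x i j) s :=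
  (continuous_apply j).comp_continuousOn ((continuous_apply i).comp_continuousOn h)

private lemma con_mat {α : Type*} [TopologicalSpace α] {M : α → Matrix (Fin 2) (Fin 2) ℝ}
    {s : Set α} (h : ∀ i j, ContinuousOn (fun x => M x i j) s) : ContinuousOn M s :=
  continuousOn_pi.2 fun i => continuousOn_pi.2 fun j => h i j

private lemma con_vec {α : Type*} [TopologicalSpace α] {v : α → Fin 2 → ℝ}
    {s : Set α} (h : ∀ i, ContinuousOn (fun x => v x i) s) : ContinuousOn v s :=
  continuousOn_pi.2 h

private lemma con_dot {α : Type*} [TopologicalSpace α] {u v : α → Fin 2 → ℝ} {s : Set α}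
    (hu : ContinuousOn u s) (hv : ContinuousOn v s) :
    ContinuousOn (fun x => u x ⬝ᵥ v x) s := by
  have e : (fun x => u x ⬝ᵥ v x) = fun x => u x 0 * v x 0 + u x 1 * v x 1 := funext fun x => by
    simp [dotProduct, Fin.sum_univ_two]
  rw [e]
  exact ((con_pi hu 0).mul (con_pi hv 0)).add ((con_pi hu 1).mul (con_pi hv 1))

private lemma con_mulVec {α : Type*} [TopologicalSpace α] {M : α → Matrix (Fin 2) (Fin 2) ℝ}
    {v : α → Fin 2 → ℝ} {s : Set α}
    (hM : ContinuousOn M s) (hv : ContinuousOn v s) :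
    ContinuousOn (fun x => M x *ᵥ v x) s := by
  apply con_vec
  intro i
  have e : (fun x => (M x *ᵥ v x) i) = fun x => M x i 0 * v x 0 + M x i 1 * v x 1 :=
    funext fun x => by simp [Matrix.mulVec, dotProduct, Fin.sum_univ_two]
  rw [e]
  exact ((con_entry hM i 0).mul (con_pi hv 0)).add ((con_entry hM i 1).mul (con_pi hv 1))


private lemma con_cmul {α : Type*} [TopologicalSpace α] (A : Matrix (Fin 2) (Fin 2) ℝ)
    {M : α → Matrix (Fin 2) (Fin 2) ℝ} {s : Set α} (h : ContinuousOn M s) :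
    ContinuousOn (fun x => A * M x) s := by
  apply con_mat
  intro i j
  have e : (fun x => (A * M x) i j) = fun x => A i 0 * M x 0 j + A i 1 * M x 1 j :=
    funext fun x => by simp [Matrix.mul_apply, Fin.sum_univ_two]
  rw [e]
  exact (continuousOn_const.mul (con_entry h 0 j)).add (continuousOn_const.mul (con_entry h 1 j))

private lemma con_mulc {α : Type*} [TopologicalSpace α] (A : Matrix (Fin 2) (Fin 2) ℝ)
    {M : α → Matrix (Fin 2) (Fin 2) ℝ} {s : Set α} (h : ContinuousOn M s) :
    ContinuousOn (fun x => M x * A) s := by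
  apply con_mat
  intro i j
  have e : (fun x => (M x * A) i j) = fun x => M x i 0 * A 0 j + M x i 1 * A 1 j :=
    funext fun x => by simp [Matrix.mul_apply, Fin.sum_univ_two]
  rw [e]
  exact ((con_entry h i 0).mul continuousOn_const).add ((con_entry h i 1).mul continuousOn_const)

private lemma con_madd {α : Type*} [TopologicalSpace α]
    {M N : α → Matrix (Fin 2) (Fin 2) ℝ} {s : Set α}
    (hM : ContinuousOn M s) (hN : ContinuousOn N s) :
    ContinuousOn (fun x => M x + N x) s := by
  apply con_mat
  intro i j
  have e : (fun x => (M x + N x) i j) = fun x => M x i j + N x i j :=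
    funext fun x => by simp [Matrix.add_apply]
  rw [e]
  exact (con_entry hM i j).add (con_entry hN i j)

private lemma con_msub {α : Type*} [TopologicalSpace α]
    {M N : α → Matrix (Fin 2) (Fin 2) ℝ} {s : Set α}
    (hM : ContinuousOn M s) (hN : ContinuousOn N s) :
    ContinuousOn (fun x => M x - N x) s := by
  apply con_mat
  intro i j
  have e : (fun x => (M x - N x) i j) = fun x => M x i j - N x i j :=
    funext fun x => by simp [Matrix.sub_apply]
  rw [e]
  exact (con_entry hM i j).sub (con_entry hN i j)

private lemma con_msmul {α : Type*} [TopologicalSpace α] (c : ℝ)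
    {M : α → Matrix (Fin 2) (Fin 2) ℝ} {s : Set α} (h : ContinuousOn M s) :
    ContinuousOn (fun x => c • M x) s := by
  apply con_mat
  intro i j
  have e : (fun x => (c • M x) i j) = fun x => c * M x i j :=
    funext fun x => by simp [Matrix.smul_apply]
  rw [e]
  exact continuousOn_const.mul (con_entry h i j)


/-- the outer-loop Lyapunov derivative identity: for
`V₂(t) = ½∫₀^ℓ p̃_sᵀ(K_q+Φ)p̃_s + p̃_tᵀp̃_t + 2p̃ᵀCp̃_t + p̃ᵀK_pp̃ ds` along solutions of
`p̃_tt = ((K_q+Φ)p̃_s)_s − K_vp̃_t − K_pp̃ + Ψ` with `p̃(0,t)=0`, `p̃_s(ℓ,t)=0`,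
`dV₂/dt = ∫₀^ℓ −p̃_sᵀ(CK_q+CΦ−½Φ_t)p̃_s + (p̃_t+Cp̃)ᵀΨ
  − (p̃_tᵀ(K_v−C)p̃_t + p̃_tᵀK_vCp̃ + p̃ᵀCK_pp̃) ds`. -/
theorem stmt_16 (ℓ : ℝ) (hℓ : 0 < ℓ)
    (Kq Kq' : ℝ → Matrix (Fin 2) (Fin 2) ℝ)
    (Kp : ℝ → Matrix (Fin 2) (Fin 2) ℝ)
    (Kv Φ Φt : ℝ → ℝ → Matrix (Fin 2) (Fin 2) ℝ)
    (Ψ : ℝ → ℝ → Fin 2 → ℝ)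
    (Cm : Matrix (Fin 2) (Fin 2) ℝ)
    -- K_q ∈ C¹ symmetric, K_p ∈ C⁰ symmetric
    (hKq' : ∀ s ∈ Set.Icc (0:ℝ) ℓ, ∀ i j,
      HasDerivWithinAt (fun x => Kq x i j) (Kq' s i j) (Set.Icc 0 ℓ) s)
    (hKq'c : ContinuousOn Kq' (Set.Icc 0 ℓ))
    (hKqsym : ∀ s ∈ Set.Icc (0:ℝ) ℓ, (Kq s).IsSymm)
    (hKpc : ContinuousOn Kp (Set.Icc 0 ℓ))
    (hKpsym : ∀ s ∈ Set.Icc (0:ℝ) ℓ, (Kp s).IsSymm)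
    -- K_v continuous symmetric
    (hKvc : ContinuousOn (fun z : ℝ × ℝ => Kv z.1 z.2) (Set.Icc 0 ℓ ×ˢ Set.Ici 0))
    (hKvsym : ∀ s ∈ Set.Icc (0:ℝ) ℓ, ∀ t ∈ Set.Ici (0:ℝ), (Kv s t).IsSymm)
    -- Φ is C¹ symmetric-valued, Ψ continuous
    (hΦsym : ∀ s ∈ Set.Icc (0:ℝ) ℓ, ∀ t ∈ Set.Ici (0:ℝ), (Φ s t).IsSymm)
    (hΦt : ∀ s ∈ Set.Icc (0:ℝ) ℓ, ∀ t ∈ Set.Ici (0:ℝ), ∀ i j,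
      HasDerivWithinAt (fun τ => Φ s τ i j) (Φt s t i j) (Set.Ici 0) t)
    (hΦc : ContinuousOn (fun z : ℝ × ℝ => (Φ z.1 z.2, Φt z.1 z.2)) (Set.Icc 0 ℓ ×ˢ Set.Ici 0))
    (hΨc : ContinuousOn (fun z : ℝ × ℝ => Ψ z.1 z.2) (Set.Icc 0 ℓ ×ˢ Set.Ici 0))
    -- C is a constant symmetric matrix with CK_p symmetric
    (hCsym : Cm.IsSymm)
    (hCKpsym : ∀ s ∈ Set.Icc (0:ℝ) ℓ, (Cm * Kp s).IsSymm)
    -- p̃ is a C² solution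
    (p ps pt pst ptt q : ℝ → ℝ → Fin 2 → ℝ)
    (hps : ∀ t ∈ Set.Ici (0:ℝ), ∀ s ∈ Set.Icc (0:ℝ) ℓ,
      HasDerivWithinAt (fun x => p x t) (ps s t) (Set.Icc 0 ℓ) s)
    (hpt : ∀ t ∈ Set.Ici (0:ℝ), ∀ s ∈ Set.Icc (0:ℝ) ℓ,
      HasDerivWithinAt (fun τ => p s τ) (pt s t) (Set.Ici 0) t)
    (hpst : ∀ t ∈ Set.Ici (0:ℝ), ∀ s ∈ Set.Icc (0:ℝ) ℓ,
      HasDerivWithinAt (fun τ => ps s τ) (pst s t) (Set.Ici 0) t)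
    (hpts : ∀ t ∈ Set.Ici (0:ℝ), ∀ s ∈ Set.Icc (0:ℝ) ℓ,
      HasDerivWithinAt (fun x => pt x t) (pst s t) (Set.Icc 0 ℓ) s)
    (hptt : ∀ t ∈ Set.Ici (0:ℝ), ∀ s ∈ Set.Icc (0:ℝ) ℓ,
      HasDerivWithinAt (fun τ => pt s τ) (ptt s t) (Set.Ici 0) t)
    -- `q = ((K_q + Φ)p̃_s)_s`, i.e. K_q + Φ is C¹ in s along p̃_s
    (hq : ∀ t ∈ Set.Ici (0:ℝ), ∀ s ∈ Set.Icc (0:ℝ) ℓ,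
      HasDerivWithinAt (fun x => (Kq x + Φ x t) *ᵥ ps x t) (q s t) (Set.Icc 0 ℓ) s)
    (hcont : ContinuousOn
      (fun z : ℝ × ℝ => (p z.1 z.2, ps z.1 z.2, pt z.1 z.2, pst z.1 z.2, ptt z.1 z.2, q z.1 z.2))
      (Set.Icc 0 ℓ ×ˢ Set.Ici 0))
    -- the PDE
    (hpde : ∀ t ∈ Set.Ici (0:ℝ), ∀ s ∈ Set.Icc (0:ℝ) ℓ,
      ptt s t = q s t - (Kv s t) *ᵥ pt s t - (Kp s) *ᵥ p s t + Ψ s t)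
    -- boundary conditions
    (hbc0 : ∀ t ∈ Set.Ici (0:ℝ), p 0 t = 0)
    (hbcl : ∀ t ∈ Set.Ici (0:ℝ), ps ℓ t = 0) :
    ∀ t ∈ Set.Ici (0:ℝ),
      HasDerivWithinAt
        (fun τ => (1/2) * ∫ s in (0:ℝ)..ℓ,
          (ps s τ ⬝ᵥ ((Kq s + Φ s τ) *ᵥ ps s τ) + pt s τ ⬝ᵥ pt s τ
            + 2 * (p s τ ⬝ᵥ (Cm *ᵥ pt s τ)) + p s τ ⬝ᵥ ((Kp s) *ᵥ p s τ)))
        (∫ s in (0:ℝ)..ℓ,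
          (-(ps s t ⬝ᵥ ((Cm * Kq s + Cm * Φ s t - (1/2 : ℝ) • Φt s t) *ᵥ ps s t))
            + (pt s t + Cm *ᵥ p s t) ⬝ᵥ Ψ s t
            - (pt s t ⬝ᵥ ((Kv s t - Cm) *ᵥ pt s t)
              + pt s t ⬝ᵥ ((Kv s t * Cm) *ᵥ p s t)
              + p s t ⬝ᵥ ((Cm * Kp s) *ᵥ p s t))))
        (Set.Ici 0) t := by
  intro t ht
  have ht' : (0:ℝ) ≤ t := ht
  have h0m : (0:ℝ) ∈ Set.Icc (0:ℝ) ℓ := ⟨le_refl _, hℓ.le⟩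
  have hℓm : ℓ ∈ Set.Icc (0:ℝ) ℓ := ⟨hℓ.le, le_refl _⟩
  -- abbreviations
  obtain ⟨F, hF⟩ : ∃ F : ℝ → ℝ → ℝ, F = fun s τ =>
    ps s τ ⬝ᵥ ((Kq s + Φ s τ) *ᵥ ps s τ) + pt s τ ⬝ᵥ pt s τ
      + 2 * (p s τ ⬝ᵥ (Cm *ᵥ pt s τ)) + p s τ ⬝ᵥ ((Kp s) *ᵥ p s τ) := ⟨_, rfl⟩
  obtain ⟨G, hG⟩ : ∃ G : ℝ → ℝ → ℝ, G = fun s u =>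
    (pst s u ⬝ᵥ ((Kq s + Φ s u) *ᵥ ps s u)
      + ps s u ⬝ᵥ (Φt s u *ᵥ ps s u + (Kq s + Φ s u) *ᵥ pst s u))
    + (ptt s u ⬝ᵥ pt s u + pt s u ⬝ᵥ ptt s u)
    + 2 * (pt s u ⬝ᵥ (Cm *ᵥ pt s u) + p s u ⬝ᵥ (Cm *ᵥ ptt s u))
    + (pt s u ⬝ᵥ ((Kp s) *ᵥ p s u) + p s u ⬝ᵥ ((Kp s) *ᵥ pt s u)) := ⟨_, rfl⟩
  obtain ⟨T, hT⟩ : ∃ T : ℝ → ℝ, T = fun s =>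
    -(ps s t ⬝ᵥ ((Cm * Kq s + Cm * Φ s t - (1/2 : ℝ) • Φt s t) *ᵥ ps s t))
      + (pt s t + Cm *ᵥ p s t) ⬝ᵥ Ψ s t
      - (pt s t ⬝ᵥ ((Kv s t - Cm) *ᵥ pt s t)
        + pt s t ⬝ᵥ ((Kv s t * Cm) *ᵥ p s t)
        + p s t ⬝ᵥ ((Cm * Kp s) *ᵥ p s t)) := ⟨_, rfl⟩
  obtain ⟨D, hD⟩ : ∃ D : ℝ → ℝ, D = fun u => (1/2 : ℝ) * ∫ s in (0:ℝ)..ℓ, G s u := ⟨_, rfl⟩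

  -- continuity of the components
  have hKqc : ContinuousOn Kq (Set.Icc 0 ℓ) :=
    con_mat fun i j s hs => (hKq' s hs i j).continuousWithinAt
  have hp2 : ContinuousOn (fun z : ℝ × ℝ => p z.1 z.2) (Set.Icc 0 ℓ ×ˢ Set.Ici 0) :=
    continuous_fst.comp_continuousOn hcont
  have hps2 : ContinuousOn (fun z : ℝ × ℝ => ps z.1 z.2) (Set.Icc 0 ℓ ×ˢ Set.Ici 0) :=
    (continuous_fst.comp continuous_snd).comp_continuousOn hcont
  have hpt2 : ContinuousOn (fun z : ℝ × ℝ => pt z.1 z.2) (Set.Icc 0 ℓ ×ˢ Set.Ici 0) :=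
    (continuous_fst.comp (continuous_snd.comp continuous_snd)).comp_continuousOn hcont
  have hpst2 : ContinuousOn (fun z : ℝ × ℝ => pst z.1 z.2) (Set.Icc 0 ℓ ×ˢ Set.Ici 0) :=
    (continuous_fst.comp
      (continuous_snd.comp (continuous_snd.comp continuous_snd))).comp_continuousOn hcont
  have hptt2 : ContinuousOn (fun z : ℝ × ℝ => ptt z.1 z.2) (Set.Icc 0 ℓ ×ˢ Set.Ici 0) :=
    (continuous_fst.comp (continuous_snd.comp
      (continuous_snd.comp (continuous_snd.comp continuous_snd)))).comp_continuousOn hcont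
  have hq2 : ContinuousOn (fun z : ℝ × ℝ => q z.1 z.2) (Set.Icc 0 ℓ ×ˢ Set.Ici 0) :=
    (continuous_snd.comp (continuous_snd.comp
      (continuous_snd.comp (continuous_snd.comp continuous_snd)))).comp_continuousOn hcont
  have hΦ2 : ContinuousOn (fun z : ℝ × ℝ => Φ z.1 z.2) (Set.Icc 0 ℓ ×ˢ Set.Ici 0) :=
    continuous_fst.comp_continuousOn hΦc
  have hΦt2 : ContinuousOn (fun z : ℝ × ℝ => Φt z.1 z.2) (Set.Icc 0 ℓ ×ˢ Set.Ici 0) :=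
    continuous_snd.comp_continuousOn hΦc
  have hKq2 : ContinuousOn (fun z : ℝ × ℝ => Kq z.1) (Set.Icc 0 ℓ ×ˢ Set.Ici 0) :=
    hKqc.comp continuous_fst.continuousOn (fun z hz => hz.1)
  have hKp2 : ContinuousOn (fun z : ℝ × ℝ => Kp z.1) (Set.Icc 0 ℓ ×ˢ Set.Ici 0) :=
    hKpc.comp continuous_fst.continuousOn (fun z hz => hz.1)
  have hA2 : ContinuousOn (fun z : ℝ × ℝ => Kq z.1 + Φ z.1 z.2) (Set.Icc 0 ℓ ×ˢ Set.Ici 0) :=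
    con_mat fun i j => (con_entry hKq2 i j).add (con_entry hΦ2 i j)
  have hGc : ContinuousOn (fun z : ℝ × ℝ => G z.1 z.2) (Set.Icc 0 ℓ ×ˢ Set.Ici 0) := by
    simp only [hG]
    exact ((((con_dot hpst2 (con_mulVec hA2 hps2)).add
        (con_dot hps2 ((con_mulVec hΦt2 hps2).add (con_mulVec hA2 hpst2)))).add
        ((con_dot hptt2 hpt2).add (con_dot hpt2 hptt2))).add
        (continuousOn_const.mul ((con_dot hpt2 (con_mulVec continuousOn_const hpt2)).add
          (con_dot hp2 (con_mulVec continuousOn_const hptt2))))).add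
        ((con_dot hpt2 (con_mulVec hKp2 hp2)).add (con_dot hp2 (con_mulVec hKp2 hpt2)))
  have hFc : ContinuousOn (fun z : ℝ × ℝ => F z.1 z.2) (Set.Icc 0 ℓ ×ˢ Set.Ici 0) := by
    simp only [hF]
    exact (((con_dot hps2 (con_mulVec hA2 hps2)).add (con_dot hpt2 hpt2)).add
        (continuousOn_const.mul (con_dot hp2 (con_mulVec continuousOn_const hpt2)))).add
        (con_dot hp2 (con_mulVec hKp2 hp2))
  -- the time derivative of the integrand
  have hFderiv : ∀ s ∈ Set.Icc (0:ℝ) ℓ, ∀ u ∈ Set.Ici (0:ℝ),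
      HasDerivWithinAt (fun τ => F s τ) (G s u) (Set.Ici 0) u := by
    intro s hs u hu
    have hAd : ∀ i j, HasDerivWithinAt (fun τ => (Kq s + Φ s τ) i j) (Φt s u i j)
        (Set.Ici 0) u := fun i j => (hΦt s hs u hu i j).const_add (Kq s i j)
    have d1 := hdw_dot (hpst u hu s hs) (hdw_mulVec hAd (hpst u hu s hs))
    have d2 := hdw_dot (hptt u hu s hs) (hptt u hu s hs)
    have d3 := (hdw_dot (hpt u hu s hs) (hdw_cmulVec Cm (hptt u hu s hs))).const_mul (2:ℝ)
    have d4 := hdw_dot (hpt u hu s hs) (hdw_cmulVec (Kp s) (hpt u hu s hs))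
    simp only [hF, hG]
    exact ((d1.add d2).add d3).add d4

  -- continuity of D
  have hDcont : ∀ u₀ ∈ Set.Ici (0:ℝ), ContinuousWithinAt D (Set.Ici 0) u₀ := by
    intro u₀ hu₀
    obtain ⟨M, hM⟩ := (isCompact_Icc.prod isCompact_Icc).exists_bound_of_continuousOn
      (s := Set.Icc (0:ℝ) ℓ ×ˢ Set.Icc (0:ℝ) (u₀+1))
      (hGc.mono (Set.prod_mono subset_rfl Set.Icc_subset_Ici_self))
    have hev : ∀ᶠ u in nhdsWithin u₀ (Set.Ici 0), u ∈ Set.Icc (0:ℝ) (u₀+1) := by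
      filter_upwards [self_mem_nhdsWithin,
        mem_nhdsWithin_of_mem_nhds (Iio_mem_nhds (lt_add_one u₀))] with u h1 h2
      exact ⟨h1, h2.le⟩
    have hbase : ContinuousWithinAt (fun u => ∫ s in (0:ℝ)..ℓ, G s u) (Set.Ici 0) u₀ := by
      apply intervalIntegral.continuousWithinAt_of_dominated_interval
        (bound := fun _ => M)
      · filter_upwards [self_mem_nhdsWithin] with u hu
        have hc : ContinuousOn (fun s => G s u) (Set.Icc 0 ℓ) :=
          hGc.comp ((continuous_id.prodMk continuous_const).continuousOn)
            (fun s hs => ⟨hs, hu⟩)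
        have := hc.aestronglyMeasurable (μ := volume) measurableSet_Icc
        apply this.mono_measure
        rw [Set.uIoc_of_le hℓ.le]
        exact Measure.restrict_mono Set.Ioc_subset_Icc_self le_rfl
      · filter_upwards [hev, self_mem_nhdsWithin] with u hu hu0
        apply Filter.Eventually.of_forall
        intro s hs
        rw [Set.uIoc_of_le hℓ.le] at hs
        exact hM (s, u) ⟨Set.Ioc_subset_Icc_self hs, hu⟩
      · exact intervalIntegrable_const
      · apply Filter.Eventually.of_forall
        intro s hs
        rw [Set.uIoc_of_le hℓ.le] at hs
        exact ContinuousWithinAt.comp (f := fun u : ℝ => (s, u))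
          (g := fun z : ℝ × ℝ => G z.1 z.2)
          (hGc (s, u₀) ⟨Set.Ioc_subset_Icc_self hs, hu₀⟩)
          ((continuous_const.prodMk continuous_id).continuousWithinAt)
          (fun u hu => ⟨Set.Ioc_subset_Icc_self hs, hu⟩)
    simp only [hD]
    exact continuousWithinAt_const.mul hbase
  have hDconOn : ContinuousOn D (Set.Ici 0) := fun u hu => hDcont u hu
  -- the fundamental identity
  have key : ∀ τ ∈ Set.Ici (0:ℝ),
      (1/2 : ℝ) * (∫ s in (0:ℝ)..ℓ, F s τ) =
        (1/2 : ℝ) * (∫ s in (0:ℝ)..ℓ, F s 0) + ∫ u in (0:ℝ)..τ, D u := by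
    intro τ hτ
    have hτ0 : (0:ℝ) ≤ τ := hτ
    have hGsc : ∀ s ∈ Set.Icc (0:ℝ) ℓ, ContinuousOn (fun u => G s u) (Set.Ici 0) := by
      intro s hs
      exact hGc.comp ((continuous_const.prodMk continuous_id).continuousOn)
        (fun u hu => ⟨hs, hu⟩)
    have hFtc : ∀ s ∈ Set.Icc (0:ℝ) ℓ, F s τ = F s 0 + ∫ u in (0:ℝ)..τ, G s u := by
      intro s hs
      have hcF : ContinuousOn (fun u => F s u) (Set.Icc 0 τ) := fun u hu =>
        ((hFderiv s hs u hu.1).continuousWithinAt).mono (fun x hx => hx.1)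
      have hderiv : ∀ x ∈ Set.Ioo (0:ℝ) τ, HasDerivWithinAt (fun u => F s u) (G s x)
          (Set.Ioi x) x := fun x hx =>
        (((hFderiv s hs x hx.1.le).hasDerivAt (Ici_mem_nhds hx.1)).hasDerivWithinAt)
      have hint : IntervalIntegrable (fun u => G s u) volume 0 τ := by
        apply ContinuousOn.intervalIntegrable
        rw [Set.uIcc_of_le hτ0]
        exact (hGsc s hs).mono (fun x hx => hx.1)
      have h := intervalIntegral.integral_eq_sub_of_hasDeriv_right_of_le hτ0 hcF hderiv hint
      linarith [h]
    have hGint : Integrable (Function.uncurry fun s u => G s u)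
        ((volume.restrict (Set.Ioc 0 ℓ)).prod (volume.restrict (Set.Ioc 0 τ))) := by
      rw [Measure.prod_restrict]
      have h1 : IntegrableOn (fun z : ℝ × ℝ => G z.1 z.2)
          (Set.Icc 0 ℓ ×ˢ Set.Icc 0 τ) volume :=
        (hGc.mono (Set.prod_mono subset_rfl Set.Icc_subset_Ici_self)).integrableOn_compact
          (isCompact_Icc.prod isCompact_Icc)
      have h2 := h1.mono_set (Set.prod_mono Set.Ioc_subset_Icc_self Set.Ioc_subset_Icc_self)
      rw [← Measure.volume_eq_prod]
      exact h2
    have hswap : (∫ s in (0:ℝ)..ℓ, ∫ u in (0:ℝ)..τ, G s u) =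
        ∫ u in (0:ℝ)..τ, ∫ s in (0:ℝ)..ℓ, G s u := by
      simp only [intervalIntegral.integral_of_le hℓ.le, intervalIntegral.integral_of_le hτ0]
      exact MeasureTheory.integral_integral_swap hGint
    have hFint0 : IntervalIntegrable (fun s => F s 0) volume 0 ℓ := by
      apply ContinuousOn.intervalIntegrable
      rw [Set.uIcc_of_le hℓ.le]
      exact hFc.comp ((continuous_id.prodMk continuous_const).continuousOn)
        (fun s hs => ⟨hs, Set.self_mem_Ici⟩)
    have hGIint : IntervalIntegrable (fun s => ∫ u in (0:ℝ)..τ, G s u) volume 0 ℓ := by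
      rw [intervalIntegrable_iff, Set.uIoc_of_le hℓ.le]
      have h := hGint.integral_prod_left
      simp only [intervalIntegral.integral_of_le hτ0]
      exact h
    calc (1/2:ℝ) * (∫ s in (0:ℝ)..ℓ, F s τ)
        = (1/2:ℝ) * ∫ s in (0:ℝ)..ℓ, (F s 0 + ∫ u in (0:ℝ)..τ, G s u) := by
          congr 1
          apply intervalIntegral.integral_congr
          intro s hs
          rw [Set.uIcc_of_le hℓ.le] at hs
          exact hFtc s hs
      _ = (1/2:ℝ) * ((∫ s in (0:ℝ)..ℓ, F s 0) + ∫ s in (0:ℝ)..ℓ, ∫ u in (0:ℝ)..τ, G s u) := by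
          rw [intervalIntegral.integral_add hFint0 hGIint]
      _ = (1/2:ℝ) * (∫ s in (0:ℝ)..ℓ, F s 0)
            + (1/2:ℝ) * ∫ u in (0:ℝ)..τ, ∫ s in (0:ℝ)..ℓ, G s u := by
          rw [hswap]; ring
      _ = (1/2:ℝ) * (∫ s in (0:ℝ)..ℓ, F s 0) + ∫ u in (0:ℝ)..τ, D u := by
          simp only [hD]
          rw [intervalIntegral.integral_const_mul]
  -- the derivative via FTC
  have hDint : IntervalIntegrable D volume 0 t := by
    apply ContinuousOn.intervalIntegrable
    rw [Set.uIcc_of_le ht']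
    exact hDconOn.mono (fun x hx => hx.1)
  have hmain0 : HasDerivWithinAt (fun τ => ∫ u in (0:ℝ)..τ, D u) (D t) (Set.Ici 0) t := by
    rcases eq_or_lt_of_le ht' with h | h
    · subst h
      refine intervalIntegral.integral_hasDerivWithinAt_right (t := Set.Ioi 0) ?_ ?_ ?_
      · rw [intervalIntegrable_iff]
        simp
      · exact ⟨Set.Ici 0, Filter.mem_of_superset self_mem_nhdsWithin Set.Ioi_subset_Ici_self,
          hDconOn.aestronglyMeasurable measurableSet_Ici⟩
      · exact (hDconOn 0 Set.self_mem_Ici).mono Set.Ioi_subset_Ici_self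
    · exact (intervalIntegral.integral_hasDerivAt_right hDint
        ⟨Set.Ici 0, Ici_mem_nhds h, hDconOn.aestronglyMeasurable measurableSet_Ici⟩
        ((hDconOn t ht).continuousAt (Ici_mem_nhds h))).hasDerivWithinAt
  have hmain : HasDerivWithinAt (fun τ => (1/2:ℝ) * ∫ s in (0:ℝ)..ℓ, F s τ)
      (D t) (Set.Ici 0) t :=
    (hmain0.const_add ((1/2:ℝ) * ∫ s in (0:ℝ)..ℓ, F s 0)).congr
      (fun τ hτ => key τ hτ) (key t ht)

  -- one-variable continuity at time t
  have hembc : ContinuousOn (fun s : ℝ => (s, t)) (Set.Icc 0 ℓ) :=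
    (continuous_id.prodMk continuous_const).continuousOn
  have hmT : Set.MapsTo (fun s : ℝ => (s, t)) (Set.Icc 0 ℓ) (Set.Icc 0 ℓ ×ˢ Set.Ici 0) :=
    fun s hs => ⟨hs, ht⟩
  have hp1 : ContinuousOn (fun s => p s t) (Set.Icc 0 ℓ) := hp2.comp hembc hmT
  have hps1 : ContinuousOn (fun s => ps s t) (Set.Icc 0 ℓ) := hps2.comp hembc hmT
  have hpt1 : ContinuousOn (fun s => pt s t) (Set.Icc 0 ℓ) := hpt2.comp hembc hmT
  have hpst1 : ContinuousOn (fun s => pst s t) (Set.Icc 0 ℓ) := hpst2.comp hembc hmT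
  have hq1 : ContinuousOn (fun s => q s t) (Set.Icc 0 ℓ) := hq2.comp hembc hmT
  have hΦ1 : ContinuousOn (fun s => Φ s t) (Set.Icc 0 ℓ) :=
    (continuous_fst.comp_continuousOn hΦc).comp hembc hmT
  have hΦt1 : ContinuousOn (fun s => Φt s t) (Set.Icc 0 ℓ) :=
    (continuous_snd.comp_continuousOn hΦc).comp hembc hmT
  have hKv1 : ContinuousOn (fun s => Kv s t) (Set.Icc 0 ℓ) := hKvc.comp hembc hmT
  have hΨ1 : ContinuousOn (fun s => Ψ s t) (Set.Icc 0 ℓ) := hΨc.comp hembc hmT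
  have hA1 : ContinuousOn (fun s => Kq s + Φ s t) (Set.Icc 0 ℓ) := con_madd hKqc hΦ1
  -- pt vanishes at s = 0
  have hpt0 : pt 0 t = 0 := by
    have hc : HasDerivWithinAt (fun τ => p 0 τ) 0 (Set.Ici 0) t :=
      (hasDerivWithinAt_const t (Set.Ici 0) (0 : Fin 2 → ℝ)).congr
        (fun τ hτ => hbc0 τ hτ) (hbc0 t ht)
    exact ((uniqueDiffOn_Ici 0) t ht).eq_deriv _ (hpt t ht 0 h0m) hc
  -- integration by parts
  obtain ⟨w, hw⟩ : ∃ w : ℝ → Fin 2 → ℝ, w = fun s => (Kq s + Φ s t) *ᵥ ps s t := ⟨_, rfl⟩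
  obtain ⟨H, hH⟩ : ∃ H : ℝ → ℝ, H = fun s => pt s t ⬝ᵥ w s + p s t ⬝ᵥ (Cm *ᵥ w s) := ⟨_, rfl⟩
  obtain ⟨HP, hHP⟩ : ∃ HP : ℝ → ℝ, HP = fun s =>
      (pst s t ⬝ᵥ w s + pt s t ⬝ᵥ q s t)
        + (ps s t ⬝ᵥ (Cm *ᵥ w s) + p s t ⬝ᵥ (Cm *ᵥ q s t)) := ⟨_, rfl⟩
  have hHderiv : ∀ s ∈ Set.Icc (0:ℝ) ℓ, HasDerivWithinAt H (HP s) (Set.Icc 0 ℓ) s := by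
    intro s hs
    simp only [hH, hHP, hw]
    exact (hdw_dot (hpts t ht s hs) (hq t ht s hs)).add
      (hdw_dot (hps t ht s hs) (hdw_cmulVec Cm (hq t ht s hs)))
  have hw1 : ContinuousOn w (Set.Icc 0 ℓ) := by
    simp only [hw]; exact con_mulVec hA1 hps1
  have hHPc : ContinuousOn HP (Set.Icc 0 ℓ) := by
    simp only [hHP]
    exact ((con_dot hpst1 hw1).add (con_dot hpt1 hq1)).add
      ((con_dot hps1 (con_mulVec continuousOn_const hw1)).add
        (con_dot hp1 (con_mulVec continuousOn_const hq1)))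
  have hHcont : ContinuousOn H (Set.Icc 0 ℓ) := fun s hs => (hHderiv s hs).continuousWithinAt
  have hHd : ∀ x ∈ Set.Ioo (0:ℝ) ℓ, HasDerivWithinAt H (HP x) (Set.Ioi x) x := fun x hx =>
    ((hHderiv x (Set.Ioo_subset_Icc_self hx)).hasDerivAt (Icc_mem_nhds hx.1 hx.2)).hasDerivWithinAt
  have hHPint : IntervalIntegrable HP volume 0 ℓ := by
    apply ContinuousOn.intervalIntegrable
    rw [Set.uIcc_of_le hℓ.le]
    exact hHPc
  have hHsub := intervalIntegral.integral_eq_sub_of_hasDeriv_right_of_le hℓ.le hHcont hHd hHPint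
  have hHl : H ℓ = 0 := by simp [hH, hw, hbcl t ht]
  have hH0 : H 0 = 0 := by simp [hH, hbc0 t ht, hpt0]
  -- continuity of the target integrand
  have hM1 : ContinuousOn (fun s => Cm * Kq s + Cm * Φ s t - (1/2 : ℝ) • Φt s t)
      (Set.Icc 0 ℓ) := con_msub (con_madd (con_cmul Cm hKqc) (con_cmul Cm hΦ1))
        (con_msmul _ hΦt1)
  have hM2 : ContinuousOn (fun s => Kv s t - Cm) (Set.Icc 0 ℓ) :=
    con_msub hKv1 continuousOn_const
  have hM3 : ContinuousOn (fun s => Kv s t * Cm) (Set.Icc 0 ℓ) := con_mulc Cm hKv1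
  have hM4 : ContinuousOn (fun s => Cm * Kp s) (Set.Icc 0 ℓ) := con_cmul Cm hKpc
  have hTc : ContinuousOn T (Set.Icc 0 ℓ) := by
    simp only [hT]
    exact ((con_dot hps1 (con_mulVec hM1 hps1)).neg.add
      (con_dot (hpt1.add (con_mulVec continuousOn_const hp1)) hΨ1)).sub
      (((con_dot hpt1 (con_mulVec hM2 hpt1)).add (con_dot hpt1 (con_mulVec hM3 hp1))).add
        (con_dot hp1 (con_mulVec hM4 hp1)))
  have hTint : IntervalIntegrable T volume 0 ℓ := by
    apply ContinuousOn.intervalIntegrable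
    rw [Set.uIcc_of_le hℓ.le]
    exact hTc
  -- pointwise algebraic identity
  have hpoint : ∀ s ∈ Set.Icc (0:ℝ) ℓ, (1/2 : ℝ) * G s t = T s + HP s := by
    intro s hs
    have e1 := hpde t ht s hs
    have hKq10 : Kq s 1 0 = Kq s 0 1 := (hKqsym s hs).apply 0 1
    have hΦ10 : Φ s t 1 0 = Φ s t 0 1 := (hΦsym s hs t ht).apply 0 1
    have hKp10 : Kp s 1 0 = Kp s 0 1 := (hKpsym s hs).apply 0 1
    have hKv10 : Kv s t 1 0 = Kv s t 0 1 := (hKvsym s hs t ht).apply 0 1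
    have hCm10 : Cm 1 0 = Cm 0 1 := hCsym.apply 0 1
    simp only [hG, hT, hHP, hw, e1]
    simp only [dotProduct, Matrix.mulVec, Matrix.mul_apply, Matrix.add_apply,
      Matrix.sub_apply, Matrix.smul_apply, Pi.add_apply, Pi.sub_apply, smul_eq_mul,
      Fin.sum_univ_two]
    simp only [hKq10, hΦ10, hKp10, hKv10, hCm10]
    ring
  -- identify the derivative with the claimed integral
  have hDt : D t = ∫ s in (0:ℝ)..ℓ, T s := by
    have h1 : (∫ s in (0:ℝ)..ℓ, (1/2 : ℝ) * G s t) = ∫ s in (0:ℝ)..ℓ, (T s + HP s) := by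
      apply intervalIntegral.integral_congr
      intro s hs
      rw [Set.uIcc_of_le hℓ.le] at hs
      exact hpoint s hs
    simp only [hD]
    rw [← intervalIntegral.integral_const_mul, h1,
      intervalIntegral.integral_add hTint hHPint, hHsub, hHl, hH0]
    ring
  rw [hDt] at hmain
  simp only [hF, hT] at hmain
  exact hmain
end
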